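/- arXiv:1906.04948 — 8 statements merged into one kernel-verified Lean document; each statement's English description precedes it below -/
import Mathlib

section
/- Let d ≥ 1, γ > 0, and p ∈ (0.5, 1]. For δ ∈ ℝ^d with 0 ≤ δ_i ≤ 2γ for all i, define ρ(δ) = max(0, p − (1 − ∏_{i=1}^d (2γ − δ_i)/(2γ)^d)). Then ρ(δ) > 0.5 for all δ with ‖δ‖₁ ≤ r if and only if r < 2pγ − γ (assuming 2pγ − γ ≥ 0). -/
lemma weier (s : Finset ℕ) (f : ℕ → ℝ) (h0 : ∀ i ∈ s, 0 ≤ f i) (h1 : ∀ i ∈ s, f i ≤ 1) :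
    1 - ∑ i ∈ s, f i ≤ ∏ i ∈ s, (1 - f i) := by
  induction s using Finset.induction with
  | empty => simp
  | insert _ _ hx ih =>
    rename_i a s'
    rw [Finset.sum_insert hx, Finset.prod_insert hx]
    have ha0 := h0 a (Finset.mem_insert_self a s')
    have ha1 := h1 a (Finset.mem_insert_self a s')
    have ih' := ih (fun i hi => h0 i (Finset.mem_insert_of_mem hi))
      (fun i hi => h1 i (Finset.mem_insert_of_mem hi))
    have hs : 0 ≤ ∑ i ∈ s', f i := Finset.sum_nonneg fun i hi => h0 i (Finset.mem_insert_of_mem hi)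
    nlinarith [mul_nonneg ha0 hs]

theorem stmt_1 (d : ℕ) (hd : 1 ≤ d) (γ p r : ℝ) (hγ : 0 < γ)
    (hp : p ∈ Set.Ioc (0.5 : ℝ) 1) (hr : 0 ≤ r) (hcert : 0 ≤ 2 * p * γ - γ) :
    (∀ δ : Fin d → ℝ, (∀ i, 0 ≤ δ i) → (∀ i, δ i ≤ 2 * γ) →
        (∑ i, |δ i|) ≤ r →
        0.5 < max 0 (p - (1 - (∏ i, (2 * γ - δ i)) / (2 * γ) ^ d)))
      ↔ r < 2 * p * γ - γ := by
  obtain ⟨hp1, hp2⟩ := hp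
  have h2γ : (0:ℝ) < 2 * γ := by linarith
  constructor
  · intro h
    by_contra hge
    push_neg at hge
    -- take δ = (2pγ - γ) on coordinate 0, else 0
    set t : ℝ := 2 * p * γ - γ with ht
    have ht2 : t ≤ 2 * γ := by nlinarith
    set δ : Fin d → ℝ := fun i => if i = ⟨0, hd⟩ then t else 0 with hδ
    have h0 : ∀ i, 0 ≤ δ i := by
      intro i; simp only [hδ]; split
      · exact hcert
      · exact le_refl 0
    have h1 : ∀ i, δ i ≤ 2 * γ := by
      intro i; simp only [hδ]; split <;> [exact ht2; positivity]
    have hsum : (∑ i, |δ i|) = t := by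
      have : ∀ i, |δ i| = δ i := fun i => abs_of_nonneg (h0 i)
      simp only [this, hδ]
      simp [Finset.sum_ite_eq', apply_ite (fun x : ℝ => |x|), abs_of_nonneg hcert]
    have hprod : (∏ i, (2 * γ - δ i)) = (2 * γ - t) * (2 * γ) ^ (d - 1) := by
      rw [show (∏ i, (2 * γ - δ i)) = ∏ i, (if i = (⟨0, hd⟩ : Fin d) then 2 * γ - t else 2 * γ)
        from Finset.prod_congr rfl (by intro i _; simp only [hδ]; split <;> simp)]
      rw [← Finset.mul_prod_erase Finset.univ _ (Finset.mem_univ (⟨0, hd⟩ : Fin d))]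
      simp only [if_pos rfl]
      congr 1
      rw [Finset.prod_congr rfl (g := fun _ => 2 * γ)
        (fun i hi => by rw [if_neg (Finset.ne_of_mem_erase hi)]),
        Finset.prod_const, Finset.card_erase_of_mem (Finset.mem_univ _), Finset.card_univ,
        Fintype.card_fin]
    have := h δ h0 h1 (by rw [hsum]; exact hge)
    rw [hprod] at this
    have hd' : (2 * γ)^d = (2*γ) * (2*γ)^(d-1) := by
      rw [← pow_succ']
      congr 1; omega
    have hratio : (2 * γ - t) * (2 * γ) ^ (d - 1) / (2 * γ) ^ d = (2 * γ - t) / (2 * γ) := by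
      rw [hd']
      field_simp
    rw [hratio] at this
    have hval : p - (1 - (2 * γ - t) / (2 * γ)) = 0.5 := by
      field_simp [ht]
      ring
    rw [hval] at this
    norm_num at this
  · intro hlt δ h0 h1 hsum
    have habs : ∀ i, |δ i| = δ i := fun i => abs_of_nonneg (h0 i)
    simp only [habs] at hsum
    -- product bound
    have key : 1 - (∑ i, δ i) / (2 * γ) ≤ (∏ i, (2 * γ - δ i)) / (2 * γ) ^ d := by
      have hrw : (∏ i, (2 * γ - δ i)) / (2 * γ) ^ d = ∏ i, (1 - δ i / (2 * γ)) := by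
        have h2 : ∏ i, (1 - δ i / (2 * γ)) = (∏ i, (2 * γ - δ i)) / (2 * γ) ^ d := by
          rw [Finset.prod_congr rfl (g := fun i => (2 * γ - δ i) / (2 * γ))
            (fun i _ => by field_simp), Finset.prod_div_distrib, Finset.prod_const,
            Finset.card_univ, Fintype.card_fin]
        exact h2.symm
      rw [hrw, Finset.sum_div]
      -- transfer to ℕ-indexed weier via equiv... instead prove directly by induction on Finset (Fin d)
      have : ∀ s : Finset (Fin d), 1 - ∑ i ∈ s, δ i / (2*γ) ≤ ∏ i ∈ s, (1 - δ i / (2*γ)) := by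
        intro s
        induction s using Finset.induction with
        | empty => simp
        | insert _ _ hx ih =>
          rename_i a s'
          rw [Finset.sum_insert hx, Finset.prod_insert hx]
          have ha0 : 0 ≤ δ a / (2*γ) := div_nonneg (h0 a) h2γ.le
          have ha1 : δ a / (2*γ) ≤ 1 := by rw [div_le_one h2γ]; exact h1 a
          have hs : 0 ≤ ∑ i ∈ s', δ i / (2*γ) :=
            Finset.sum_nonneg fun i _ => div_nonneg (h0 i) h2γ.le
          nlinarith [mul_nonneg ha0 hs]
      exact this Finset.univ
    have hsd : (∑ i, δ i) / (2 * γ) ≤ r / (2 * γ) := by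
      exact div_le_div_of_nonneg_right hsum h2γ.le
    have hrlt : r / (2 * γ) < p - 0.5 := by
      rw [div_lt_iff₀ h2γ]; nlinarith
    have : (0.5:ℝ) < p - (1 - (∏ i, (2 * γ - δ i)) / (2 * γ) ^ d) := by
      have := le_trans hsd hrlt.le
      nlinarith [key]
    exact lt_of_lt_of_le this (le_max_right 0 _)
end

section
/- Let d ≥ 1, γ > 0, and p ∈ (0.5, 1]. For δ ∈ ℝ^d with 0 ≤ δ_i ≤ 2γ, define ρ(δ) = max(0, p − (1 − ∏_{i=1}^d (2γ − δ_i)/(2γ)^d)). Then ρ(δ) > 0.5 for all δ with ‖δ‖_∞ ≤ r if and only if r < 2γ − 2γ(1.5 − p)^{1/d}. -/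
theorem stmt_2 (d : ℕ) (hd : 1 ≤ d) (γ p r : ℝ) (hγ : 0 < γ)
    (hp : p ∈ Set.Ioc (0.5 : ℝ) 1) (hr : 0 ≤ r) :
    (∀ δ : Fin d → ℝ, (∀ i, 0 ≤ δ i) → (∀ i, δ i ≤ 2 * γ) →
        (∀ i, |δ i| ≤ r) →
        0.5 < max 0 (p - (1 - (∏ i, (2 * γ - δ i)) / (2 * γ) ^ d)))
      ↔ r < 2 * γ - 2 * γ * (1.5 - p) ^ ((1 : ℝ) / d) := by
  obtain ⟨hp1, hp2⟩ := hp
  have hd0 : (d : ℝ) ≠ 0 := Nat.cast_ne_zero.mpr (by omega)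
  have hc0 : (0 : ℝ) < 1.5 - p := by norm_num; linarith
  have hc1 : (1.5 : ℝ) - p < 1 := by norm_num; linarith
  set A := (1.5 - p) ^ ((1 : ℝ) / d) with hA
  have hA0 : 0 < A := Real.rpow_pos_of_pos hc0 _
  have hA1 : A < 1 := Real.rpow_lt_one hc0.le hc1 (by positivity)
  have h2γ : (0 : ℝ) < 2 * γ := by linarith
  have hApow : A ^ d = 1.5 - p := by
    rw [hA, ← Real.rpow_natCast ((1.5 - p) ^ ((1 : ℝ) / d)) d,
      ← Real.rpow_mul hc0.le, one_div, inv_mul_cancel₀ hd0, Real.rpow_one]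
  have hpowpos : (0 : ℝ) < (2 * γ) ^ d := by positivity
  constructor
  · intro H
    set m := min r (2 * γ) with hm
    have hm0 : 0 ≤ m := le_min hr h2γ.le
    have h1 := H (fun _ => m) (fun _ => hm0) (fun _ => min_le_right _ _)
      (fun _ => by rw [abs_of_nonneg hm0]; exact min_le_left _ _)
    simp only [Finset.prod_const, Finset.card_univ, Fintype.card_fin] at h1
    rw [lt_max_iff] at h1
    have h2 : 1.5 - p < (2 * γ - m) ^ d / (2 * γ) ^ d := by
      rcases h1 with h | h
      · norm_num at h
      · linarith
    have h3 : (1.5 - p) * (2 * γ) ^ d < (2 * γ - m) ^ d := by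
      rw [lt_div_iff₀ hpowpos] at h2; linarith
    have hr2 : r < 2 * γ := by
      by_contra hcon
      push_neg at hcon
      have hme : m = 2 * γ := min_eq_right hcon
      rw [hme] at h3
      rw [show 2 * γ - 2 * γ = (0:ℝ) by ring, zero_pow (by omega)] at h3
      nlinarith
    have hmr : m = r := min_eq_left hr2.le
    rw [hmr] at h3
    have h4 : (A * (2 * γ)) ^ d < (2 * γ - r) ^ d := by
      rw [mul_pow, hApow]; exact h3
    have h5 : A * (2 * γ) < 2 * γ - r := by
      by_contra hcon
      push_neg at hcon
      exact absurd (pow_le_pow_left₀ (by linarith) hcon d) (not_le.mpr h4)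
    linarith
  · intro H δ hδ0 hδ2 hδr
    rw [lt_max_iff]
    right
    have hkey : A * (2 * γ) < 2 * γ - r := by linarith
    have hstep : (2 * γ - r) ^ d ≤ ∏ i, (2 * γ - δ i) := by
      have : ∏ _i : Fin d, (2 * γ - r) ≤ ∏ i, (2 * γ - δ i) := by
        apply Finset.prod_le_prod
        · intro i _
          nlinarith
        · intro i _
          have := hδr i
          have h := abs_le.mp this
          linarith [h.2]
      simpa using this
    have hprod : (1.5 - p) * (2 * γ) ^ d < ∏ i, (2 * γ - δ i) := by
      have : (A * (2 * γ)) ^ d < (2 * γ - r) ^ d := by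
        apply pow_lt_pow_left₀ hkey (by positivity)
        omega
      rw [mul_pow, hApow] at this
      linarith
    have : 1.5 - p < (∏ i, (2 * γ - δ i)) / (2 * γ) ^ d := by
      rw [lt_div_iff₀ hpowpos]; linarith
    linarith
end

section
/- Let (π_1,…,π_n) and (π̄_1,…,π̄_n) be nonnegative vectors with ∑_i π_i = ∑_i π̄_i = 1, sorted so that the likelihood ratios η_i = π_i/π̄_i (with the convention η_i = ∞ if π̄_i = 0 < π_i) are non-increasing: η_1 ≥ η_2 ≥ … ≥ η_n. For p ∈ [0,1], let H* be the least index H with ∑_{i=1}^H π_i ≥ p. Then the minimum of ∑_i π̄_i g(i) over all g : {1,…,n} → [0,1] satisfying ∑_i π_i g(i) = p equals ∑_{i=1}^{H*−1} π̄_i + (p − ∑_{i=1}^{H*−1} π_i)/η_{H*}, attained by g*(i) = 1 for i < H*, g*(H*) = (p − ∑_{i<H*} π_i)/π_{H*}, and g*(i) = 0 for i > H*. -/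
/-!
Neyman–Pearson: for a test `g` with values in `[0, 1]`, weigh the regions by
`π k * πb i - πb k * π i`, where `k` is the region on which the cumulative mass of `π`
reaches `p`. Sorting by likelihood ratio makes this weight nonpositive before `k` and
nonnegative after it, so its sign agrees with that of `g - g*` for the threshold test `g*`.
Summing, `π k * (∑ πb g - ∑ πb g*) ≥ πb k * (∑ π g - ∑ π g*) = 0`.
-/

open Finset

section NeymanPearson

variable {ι : Type*} (s : Finset ι) {π πb g g₀ : ι → ℝ} {a b : ℝ}

theorem sum_mul_le_sum_mul_of_sign (ha : 0 < a)
    (hsign : ∀ i ∈ s, 0 ≤ (a * πb i - b * π i) * (g i - g₀ i))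
    (hπ : ∑ i ∈ s, π i * g i = ∑ i ∈ s, π i * g₀ i) :
    ∑ i ∈ s, πb i * g₀ i ≤ ∑ i ∈ s, πb i * g i := by
  have hexpand : ∑ i ∈ s, (a * πb i - b * π i) * (g i - g₀ i)
      = a * (∑ i ∈ s, πb i * g i - ∑ i ∈ s, πb i * g₀ i)
        - b * (∑ i ∈ s, π i * g i - ∑ i ∈ s, π i * g₀ i) := by
    simp only [mul_sub, Finset.mul_sum, ← Finset.sum_sub_distrib]
    exact sum_congr rfl fun i _ => by ring
  have hnonneg := sum_nonneg hsign
  rw [hexpand, hπ, sub_self, mul_zero, sub_zero] at hnonneg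
  exact sub_nonneg.1 (nonneg_of_mul_nonneg_right hnonneg ha)

end NeymanPearson

def thresholdTest (k : ℕ) (t : ℝ) (i : ℕ) : ℝ :=
  if i < k then 1 else if i = k then t else 0

theorem thresholdTest_mem_Icc {k : ℕ} {t : ℝ} (ht : t ∈ Set.Icc (0 : ℝ) 1) (i : ℕ) :
    thresholdTest k t i ∈ Set.Icc (0 : ℝ) 1 := by
  unfold thresholdTest
  split_ifs
  exacts [⟨zero_le_one, le_rfl⟩, ht, ⟨le_rfl, zero_le_one⟩]

theorem sum_range_mul_thresholdTest (f : ℕ → ℝ) {k n : ℕ} (t : ℝ) (hkn : k < n) :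
    ∑ i ∈ range n, f i * thresholdTest k t i = ∑ i ∈ range k, f i + f k * t := by
  induction n, hkn using Nat.le_induction with
  | base =>
    rw [sum_range_succ]
    congr 1
    · exact sum_congr rfl fun i hi => by simp [thresholdTest, mem_range.1 hi]
    · simp [thresholdTest]
  | succ m hkm ih =>
    rw [sum_range_succ, ih, thresholdTest, if_neg (by omega), if_neg (by omega), mul_zero,
      add_zero]

section Sorted

variable {n k : ℕ} {π πb : ℕ → ℝ}

theorem thresholdTest_sign (hsorted : ∀ i j, i < n → j < n → i ≤ j → π j * πb i ≤ π i * πb j)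
    (hkn : k < n) {g : ℕ → ℝ} (hg : ∀ i < n, g i ∈ Set.Icc (0 : ℝ) 1) (t : ℝ) {i : ℕ}
    (hi : i < n) : 0 ≤ (π k * πb i - πb k * π i) * (g i - thresholdTest k t i) := by
  rcases lt_trichotomy i k with hik | rfl | hik
  · have hratio := hsorted i k hi hkn hik.le
    rw [thresholdTest, if_pos hik]
    exact mul_nonneg_of_nonpos_of_nonpos (by linarith) (by linarith [(hg i hi).2])
  · simp [mul_comm]
  · have hratio := hsorted k i hkn hi hik.le
    rw [thresholdTest, if_neg (by omega), if_neg (by omega)]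
    exact mul_nonneg (by linarith) (by linarith [(hg i hi).1])

theorem sum_mul_thresholdTest_le
    (hsorted : ∀ i j, i < n → j < n → i ≤ j → π j * πb i ≤ π i * πb j)
    (hkn : k < n) (hπk : 0 < π k) {g : ℕ → ℝ} (hg : ∀ i < n, g i ∈ Set.Icc (0 : ℝ) 1) (t : ℝ)
    (hπ : ∑ i ∈ range n, π i * g i = ∑ i ∈ range n, π i * thresholdTest k t i) :
    ∑ i ∈ range n, πb i * thresholdTest k t i ≤ ∑ i ∈ range n, πb i * g i :=
  sum_mul_le_sum_mul_of_sign _ hπk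
    (fun _ hi => thresholdTest_sign hsorted hkn hg t (mem_range.1 hi)) hπ

end Sorted

theorem stmt_4_general (n : ℕ) (π πb : ℕ → ℝ)
    (hπ0 : ∀ i < n, 0 ≤ π i) (hπb0 : ∀ i < n, 0 ≤ πb i)
    -- likelihood ratios `π i / πb i` are non-increasing (cross-multiplied form,
    -- valid under the convention `η i = ∞` when `πb i = 0 < π i`):
    (hsorted : ∀ i j, i < n → j < n → i ≤ j → π j * πb i ≤ π i * πb j)
    (p : ℝ) (hp : p ∈ Set.Icc (0 : ℝ) 1)
    (H : ℕ) (hH1 : 1 ≤ H) (hHn : H ≤ n)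
    (hHge : p ≤ ∑ i ∈ Finset.range H, π i)
    (hHleast : ∀ H', 1 ≤ H' → H' < H → ∑ i ∈ Finset.range H', π i < p) :
    IsLeast
      {s : ℝ | ∃ g : ℕ → ℝ, (∀ i < n, g i ∈ Set.Icc (0 : ℝ) 1) ∧
        (∑ i ∈ Finset.range n, π i * g i) = p ∧
        s = ∑ i ∈ Finset.range n, πb i * g i}
      (∑ i ∈ Finset.range (H - 1), πb i
        + (p - ∑ i ∈ Finset.range (H - 1), π i) * πb (H - 1) / π (H - 1)) := by
  obtain ⟨k, rfl⟩ : ∃ k, H = k + 1 := ⟨H - 1, by omega⟩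
  rw [Nat.add_sub_cancel]
  have hkn : k < n := by omega
  have hπk := hπ0 k hkn
  set S := ∑ i ∈ range k, π i
  have hSp : S ≤ p := by
    rcases k.eq_zero_or_pos with rfl | hk
    · simpa [S] using hp.1
    · exact (hHleast k hk (by omega)).le
  have hpS : p ≤ S + π k := by rwa [← sum_range_succ]
  -- If `π k = 0` the division returns the junk value `0`, but then `p = S`, so `t` still works.
  set t := (p - S) / π k
  have ht : t ∈ Set.Icc (0 : ℝ) 1 :=
    ⟨div_nonneg (by linarith) hπk, div_le_one_of_le₀ (by linarith) hπk⟩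
  have hπkt : π k * t = p - S := by
    rcases hπk.eq_or_lt with h | h
    · rw [← h, zero_mul]; linarith
    · exact mul_div_cancel₀ _ h.ne'
  have hp_test : ∑ i ∈ range n, π i * thresholdTest k t i = p := by
    rw [sum_range_mul_thresholdTest _ _ hkn, hπkt]; ring
  have hvalue : ∑ i ∈ range n, πb i * thresholdTest k t i
      = ∑ i ∈ range k, πb i + (p - S) * πb k / π k := by
    rw [sum_range_mul_thresholdTest _ _ hkn]; ring
  refine ⟨⟨_, fun i _ => thresholdTest_mem_Icc ht i, hp_test, hvalue.symm⟩, ?_⟩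
  rintro _ ⟨g, hg, hgp, rfl⟩
  rcases hπk.eq_or_lt with h | h
  · -- `π k = 0` forces `k = 0` and `p = 0`: the bound is `0`.
    obtain rfl : k = 0 := by by_contra hk; linarith [hHleast k (by omega) (by omega)]
    simpa [← h] using sum_nonneg fun i hi =>
      mul_nonneg (hπb0 i (mem_range.1 hi)) (hg i (mem_range.1 hi)).1
  · rw [← hvalue]
    exact sum_mul_thresholdTest_le hsorted hkn h hg t (hgp.trans hp_test.symm)

/-- Finite Neyman–Pearson lemma (Lemma 1 of the paper): the worst-case
smoothed probability at `x̄` given probability `p` at `x`, over constant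
likelihood-ratio regions with probabilities `π` (under `φ(x)`) and `π̄`
(under `φ(x̄)`), sorted by non-increasing likelihood ratio. -/
theorem stmt_4 (n : ℕ) (hn : 1 ≤ n) (π πb : ℕ → ℝ)
    (hπ0 : ∀ i < n, 0 ≤ π i) (hπb0 : ∀ i < n, 0 ≤ πb i)
    (hπ1 : ∑ i ∈ Finset.range n, π i = 1)
    (hπb1 : ∑ i ∈ Finset.range n, πb i = 1)
    -- likelihood ratios `π i / πb i` are non-increasing (cross-multiplied form,
    -- valid under the convention `η i = ∞` when `πb i = 0 < π i`):
    (hsorted : ∀ i j, i < n → j < n → i ≤ j → π j * πb i ≤ π i * πb j)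
    (p : ℝ) (hp : p ∈ Set.Icc (0 : ℝ) 1)
    (H : ℕ) (hH1 : 1 ≤ H) (hHn : H ≤ n)
    (hHge : p ≤ ∑ i ∈ Finset.range H, π i)
    (hHleast : ∀ H', 1 ≤ H' → H' < H → ∑ i ∈ Finset.range H', π i < p) :
    IsLeast
      {s : ℝ | ∃ g : ℕ → ℝ, (∀ i < n, g i ∈ Set.Icc (0 : ℝ) 1) ∧
        (∑ i ∈ Finset.range n, π i * g i) = p ∧
        s = ∑ i ∈ Finset.range n, πb i * g i}
      (∑ i ∈ Finset.range (H - 1), πb i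
        + (p - ∑ i ∈ Finset.range (H - 1), π i) * πb (H - 1) / π (H - 1)) :=
  stmt_4_general n π πb hπ0 hπb0 hsorted p hp H hH1 hHn hHge hHleast
end

section
/- In the setting of the previous statement (sorted likelihood ratios η_1 ≥ … ≥ η_n, probability vectors π and π̄), the function ρ(p) = ∑_{i=1}^{H*(p)−1} π̄_i + (p − ∑_{i=1}^{H*(p)−1} π_i)/η_{H*(p)} is monotonically increasing and continuous in p on [0,1]. If moreover η_1 < ∞, then ρ is strictly increasing; if additionally η_n > 0, then ρ : [0,1] → [0,1] is a bijection. -/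
/-- Remark 1 of the paper: properties of the tight point-wise certificate
`ρ(p)` (defined as the optimal value of the Neyman–Pearson linear program
over sorted constant likelihood-ratio regions). `η₁ < ∞` corresponds to
`0 < πb 0`, and `ηₙ > 0` corresponds to `0 < π (n-1)`. -/
theorem stmt_5 (n : ℕ) (hn : 1 ≤ n) (π πb : ℕ → ℝ)
    (hπ0 : ∀ i < n, 0 ≤ π i) (hπb0 : ∀ i < n, 0 ≤ πb i)
    (hπ1 : ∑ i ∈ Finset.range n, π i = 1)
    (hπb1 : ∑ i ∈ Finset.range n, πb i = 1)
    (hsorted : ∀ i j, i < n → j < n → i ≤ j → π j * πb i ≤ π i * πb j)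
    (ρ : ℝ → ℝ)
    (hρ : ∀ p, ρ p = sInf {s : ℝ | ∃ g : ℕ → ℝ,
        (∀ i < n, g i ∈ Set.Icc (0 : ℝ) 1) ∧
        (∑ i ∈ Finset.range n, π i * g i) = p ∧
        s = ∑ i ∈ Finset.range n, πb i * g i}) :
    MonotoneOn ρ (Set.Icc 0 1) ∧ ContinuousOn ρ (Set.Icc 0 1) ∧
      (0 < πb 0 → StrictMonoOn ρ (Set.Icc 0 1)) ∧
      (0 < πb 0 → 0 < π (n - 1) →
        Set.BijOn ρ (Set.Icc 0 1) (Set.Icc 0 1)) := by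
  classical
  set A : ℝ → Set ℝ := fun p => {s : ℝ | ∃ g : ℕ → ℝ,
      (∀ i < n, g i ∈ Set.Icc (0 : ℝ) 1) ∧
      (∑ i ∈ Finset.range n, π i * g i) = p ∧
      s = ∑ i ∈ Finset.range n, πb i * g i} with hAdef
  have hρA : ∀ p, ρ p = sInf (A p) := hρ
  -- every element of A p is nonnegative
  have hApos : ∀ p, ∀ s ∈ A p, (0 : ℝ) ≤ s := by
    intro p s hs
    obtain ⟨g, hg, -, rfl⟩ := hs
    exact Finset.sum_nonneg fun i hi =>
      mul_nonneg (hπb0 i (Finset.mem_range.1 hi)) (hg i (Finset.mem_range.1 hi)).1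
  have hbdd : ∀ p, BddBelow (A p) := fun p => ⟨0, fun s hs => hApos p s hs⟩
  -- constant witness: p ∈ A p for p ∈ [0,1]
  have hmemconst : ∀ p ∈ Set.Icc (0:ℝ) 1, p ∈ A p := by
    intro p hp
    refine ⟨fun _ => p, fun i _ => hp, ?_, ?_⟩
    · rw [← Finset.sum_mul, hπ1, one_mul]
    · rw [← Finset.sum_mul, hπb1, one_mul]
  have hne : ∀ p ∈ Set.Icc (0:ℝ) 1, (A p).Nonempty := fun p hp => ⟨p, hmemconst p hp⟩
  have hle : ∀ p, ∀ s ∈ A p, ρ p ≤ s := by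
    intro p s hs
    rw [hρA p]; exact csInf_le (hbdd p) hs
  have hlb : ∀ p ∈ Set.Icc (0:ℝ) 1, ∀ c : ℝ, (∀ s ∈ A p, c ≤ s) → c ≤ ρ p := by
    intro p hp c hc
    rw [hρA p]; exact le_csInf (hne p hp) hc
  have hge0 : ∀ p ∈ Set.Icc (0:ℝ) 1, 0 ≤ ρ p := fun p hp => hlb p hp 0 (hApos p)
  -- ρ 0 = 0
  have hρ0 : ρ 0 = 0 := by
    have h0 : (0:ℝ) ∈ A 0 := by
      refine ⟨fun _ => 0, fun i _ => ⟨le_refl 0, zero_le_one⟩, ?_, ?_⟩ <;> simp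
    exact le_antisymm (hle 0 0 h0) (hge0 0 ⟨le_refl 0, zero_le_one⟩)
  -- scaling lemma
  have hscale : ∀ p q : ℝ, 0 ≤ p → p ≤ q → q ≤ 1 → ρ p ≤ (p / q) * ρ q := by
    intro p q hp hpq hq1
    rcases eq_or_lt_of_le hp with hp0 | hp0
    · rw [← hp0, hρ0]
      simp
    have hq0 : 0 < q := lt_of_lt_of_le hp0 hpq
    have hpq1 : p / q ≤ 1 := div_le_one_of_le₀ hpq hq0.le
    have hpq0 : 0 ≤ p / q := div_nonneg hp hq0.le
    -- for every s ∈ A q, (p/q) * s ∈ A p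
    have key : ∀ s ∈ A q, (p / q) * s ∈ A p := by
      intro s hs
      obtain ⟨g, hg, hsum, rfl⟩ := hs
      refine ⟨fun i => (p / q) * g i, ?_, ?_, ?_⟩
      · intro i hi
        exact ⟨mul_nonneg hpq0 (hg i hi).1, mul_le_one₀ hpq1 (hg i hi).1 (hg i hi).2⟩
      · have : ∑ i ∈ Finset.range n, π i * ((p/q) * g i)
            = (p/q) * ∑ i ∈ Finset.range n, π i * g i := by
          rw [Finset.mul_sum]; exact Finset.sum_congr rfl fun i _ => by ring
        rw [this, hsum, div_mul_cancel₀ _ hq0.ne']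
      · rw [Finset.mul_sum]; exact Finset.sum_congr rfl fun i _ => by ring
    have hq' : q ∈ Set.Icc (0:ℝ) 1 := ⟨hq0.le, hq1⟩
    have : (q / p) * ρ p ≤ ρ q := by
      apply hlb q hq' _
      intro s hs
      have h1 : ρ p ≤ (p / q) * s := hle p _ (key s hs)
      calc (q / p) * ρ p ≤ (q / p) * ((p / q) * s) := by
            apply mul_le_mul_of_nonneg_left h1 (div_nonneg hq0.le hp)
        _ = s := by field_simp
    calc ρ p = (p / q) * ((q / p) * ρ p) := by field_simp
      _ ≤ (p / q) * ρ q := mul_le_mul_of_nonneg_left this hpq0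
  -- monotonicity
  have hmono : MonotoneOn ρ (Set.Icc 0 1) := by
    intro p hp q hq hpq
    calc ρ p ≤ (p / q) * ρ q := hscale p q hp.1 hpq hq.2
      _ ≤ 1 * ρ q := mul_le_mul_of_nonneg_right
            (div_le_one_of_le₀ hpq (hp.1.trans hpq)) (hge0 q hq)
      _ = ρ q := one_mul _
  -- Lipschitz constant
  set r : ℝ := ∑ i ∈ Finset.range n, if 0 < π i then πb i / π i else 0 with hrdef
  have hr0 : 0 ≤ r := Finset.sum_nonneg fun i hi => by
    split
    · exact div_nonneg (hπb0 i (Finset.mem_range.1 hi)) (hπ0 i (Finset.mem_range.1 hi))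
    · exact le_refl 0
  have hratio : ∀ i < n, 0 < π i → πb i ≤ r * π i := by
    intro i hi hpi
    have h1 : πb i / π i ≤ r := by
      have hs := Finset.single_le_sum (f := fun j => if 0 < π j then πb j / π j else 0)
        (fun j hj => by
          split
          · exact div_nonneg (hπb0 j (Finset.mem_range.1 hj)) (hπ0 j (Finset.mem_range.1 hj))
          · exact le_refl 0) (Finset.mem_range.2 hi)
      rw [hrdef]
      simpa [hpi] using hs
    calc πb i = (πb i / π i) * π i := by field_simp
      _ ≤ r * π i := mul_le_mul_of_nonneg_right h1 hpi.le
  -- Lipschitz bound: ρ q ≤ ρ p + r * (q - p)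
  have hLip : ∀ p q : ℝ, 0 ≤ p → p ≤ q → q ≤ 1 → ρ q ≤ ρ p + r * (q - p) := by
    intro p q hp hpq hq1
    rcases eq_or_lt_of_le (hpq.trans hq1) with hp1 | hp1
    · have hq : q = 1 := le_antisymm hq1 (hp1 ▸ hpq)
      rw [hq, ← hp1]
      simp
    -- p < 1; set t
    set t : ℝ := (q - p) / (1 - p) with htdef
    have h1p : 0 < 1 - p := by linarith
    have ht0 : 0 ≤ t := div_nonneg (by linarith) h1p.le
    have ht1 : t ≤ 1 := div_le_one_of_le₀ (by linarith) h1p.le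
    have htqp : t * (1 - p) = q - p := by
      rw [htdef]; exact div_mul_cancel₀ _ h1p.ne'
    have hp' : p ∈ Set.Icc (0:ℝ) 1 := ⟨hp, hpq.trans hq1⟩
    have : ρ q - r * (q - p) ≤ ρ p := by
      apply hlb p hp'
      intro s hs
      obtain ⟨g, hg, hsum, rfl⟩ := hs
      -- the raised witness
      set h : ℕ → ℝ := fun i => if 0 < π i then g i + t * (1 - g i) else g i with hhdef
      have hπz : ∀ i < n, ¬ (0 < π i) → π i = 0 := fun i hi hni =>
        le_antisymm (not_lt.1 hni) (hπ0 i hi)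
      have hsum1p : ∑ i ∈ Finset.range n, π i * (1 - g i) = 1 - p := by
        have : ∑ i ∈ Finset.range n, π i * (1 - g i)
            = ∑ i ∈ Finset.range n, π i - ∑ i ∈ Finset.range n, π i * g i := by
          rw [← Finset.sum_sub_distrib]
          exact Finset.sum_congr rfl fun i _ => by ring
        rw [this, hπ1, hsum]
      have hmem : (∑ i ∈ Finset.range n, πb i * h i) ∈ A q := by
        refine ⟨h, ?_, ?_, rfl⟩
        · intro i hi
          simp only [hhdef]
          split
          · constructor
            · have := (hg i hi).1
              have := (hg i hi).2
              nlinarith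
            · have := (hg i hi).2
              nlinarith [(hg i hi).1]
          · exact hg i hi
        · have : ∀ i ∈ Finset.range n, π i * h i = π i * g i + t * (π i * (1 - g i)) := by
            intro i hi
            simp only [hhdef]
            split
            · ring
            · rw [hπz i (Finset.mem_range.1 hi) (by assumption)]; ring
          rw [Finset.sum_congr rfl this, Finset.sum_add_distrib, ← Finset.mul_sum,
            hsum, hsum1p, htqp]
          ring
      have hval : (∑ i ∈ Finset.range n, πb i * h i)
          ≤ (∑ i ∈ Finset.range n, πb i * g i) + r * (q - p) := by
        have hterm : ∀ i ∈ Finset.range n,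
            πb i * h i ≤ πb i * g i + t * (r * (π i * (1 - g i))) := by
          intro i hi
          have hi' := Finset.mem_range.1 hi
          simp only [hhdef]
          split
          · rename_i hpi
            have h1 : πb i * (1 - g i) ≤ r * π i * (1 - g i) :=
              mul_le_mul_of_nonneg_right (hratio i hi' hpi) (by linarith [(hg i hi').2])
            nlinarith
          · rename_i hpi
            have : π i = 0 := hπz i hi' hpi
            rw [this]; ring_nf; nlinarith [mul_nonneg ht0 hr0]
        calc ∑ i ∈ Finset.range n, πb i * h i
            ≤ ∑ i ∈ Finset.range n, (πb i * g i + t * (r * (π i * (1 - g i)))) :=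
              Finset.sum_le_sum hterm
          _ = (∑ i ∈ Finset.range n, πb i * g i)
              + t * r * ∑ i ∈ Finset.range n, π i * (1 - g i) := by
              rw [Finset.sum_add_distrib]
              congr 1
              rw [Finset.mul_sum]
              exact Finset.sum_congr rfl fun i _ => by ring
          _ = (∑ i ∈ Finset.range n, πb i * g i) + r * (q - p) := by
              rw [hsum1p, ← htqp]; ring
      have := hle q _ hmem
      linarith
    linarith
  -- continuity from the Lipschitz bound
  have hcont : ContinuousOn ρ (Set.Icc 0 1) := by
    have hlip : LipschitzOnWith r.toNNReal ρ (Set.Icc 0 1) := by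
      apply LipschitzOnWith.of_dist_le_mul
      intro x hx y hy
      have key : ∀ a b : ℝ, a ∈ Set.Icc (0:ℝ) 1 → b ∈ Set.Icc (0:ℝ) 1 → a ≤ b →
          dist (ρ a) (ρ b) ≤ r.toNNReal * dist a b := by
        intro a b ha hb hab
        have h1 := hLip a b ha.1 hab hb.2
        have h2 := hmono ha hb hab
        rw [Real.dist_eq, Real.dist_eq, abs_of_nonpos (by linarith), abs_of_nonpos (by linarith)]
        have : (r.toNNReal : ℝ) = max r 0 := by
          simp [Real.coe_toNNReal', max_comm]
        rw [this]
        have : r * (b - a) ≤ max r 0 * (b - a) :=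
          mul_le_mul_of_nonneg_right (le_max_left r 0) (by linarith)
        linarith
      rcases le_total x y with hxy | hxy
      · exact key x y hx hy hxy
      · rw [dist_comm (ρ x), dist_comm x]
        exact key y x hy hx hxy
    exact hlip.continuousOn
  -- strict monotonicity
  have hstrict : 0 < πb 0 → StrictMonoOn ρ (Set.Icc 0 1) := by
    intro hb0
    -- π 0 > 0
    have hπ00 : 0 < π 0 := by
      rcases lt_or_ge 0 (π 0) with h | h
      · exact h
      have hz : π 0 = 0 := le_antisymm h (hπ0 0 hn)
      exfalso
      have : ∀ j < n, π j = 0 := by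
        intro j hj
        have := hsorted 0 j hn hj (Nat.zero_le j)
        rw [hz, zero_mul] at this
        nlinarith [hπ0 j hj]
      have : ∑ i ∈ Finset.range n, π i = 0 :=
        Finset.sum_eq_zero fun i hi => this i (Finset.mem_range.1 hi)
      rw [hπ1] at this; norm_num at this
    set c : ℝ := πb 0 / π 0 with hcdef
    have hc0 : 0 < c := div_pos hb0 hπ00
    have hcpi : ∀ i < n, c * π i ≤ πb i := by
      intro i hi
      have := hsorted 0 i hn hi (Nat.zero_le i)
      rw [hcdef, div_mul_eq_mul_div, div_le_iff₀ hπ00]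
      nlinarith
    have hlow : ∀ q ∈ Set.Icc (0:ℝ) 1, c * q ≤ ρ q := by
      intro q hq
      apply hlb q hq
      intro s hs
      obtain ⟨g, hg, hsum, rfl⟩ := hs
      calc c * q = ∑ i ∈ Finset.range n, c * (π i * g i) := by
            rw [← Finset.mul_sum, hsum]
        _ ≤ ∑ i ∈ Finset.range n, πb i * g i := by
            apply Finset.sum_le_sum
            intro i hi
            have hi' := Finset.mem_range.1 hi
            rw [← mul_assoc]
            exact mul_le_mul_of_nonneg_right (hcpi i hi') (hg i hi').1
    intro p hp q hq hpq
    have hq0 : 0 < q := lt_of_le_of_lt hp.1 hpq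
    have hρq : 0 < ρ q := lt_of_lt_of_le (mul_pos hc0 hq0) (hlow q hq)
    calc ρ p ≤ (p / q) * ρ q := hscale p q hp.1 hpq.le hq.2
      _ < 1 * ρ q := by
          apply mul_lt_mul_of_pos_right _ hρq
          rw [div_lt_one hq0]; exact hpq
      _ = ρ q := one_mul _
  refine ⟨hmono, hcont, hstrict, ?_⟩
  -- bijection
  intro hb0 hlast
  have hstrict' := hstrict hb0
  set R : ℝ := πb (n-1) / π (n-1) with hRdef
  have hRpi : ∀ i < n, πb i ≤ R * π i := by
    intro i hi
    have hin : i ≤ n - 1 := Nat.le_sub_one_of_lt hi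
    have hn1 : n - 1 < n := Nat.sub_lt (lt_of_lt_of_le Nat.zero_lt_one hn) Nat.zero_lt_one
    have := hsorted i (n-1) hi hn1 hin
    rw [hRdef, div_mul_eq_mul_div, le_div_iff₀ hlast]
    nlinarith
  -- ρ 1 = 1
  have hρ1 : ρ 1 = 1 := by
    have hub : ρ 1 ≤ 1 := by
      apply hle 1
      refine ⟨fun _ => 1, fun i _ => ⟨zero_le_one, le_refl 1⟩, ?_, ?_⟩
      · simpa using hπ1
      · simp only [mul_one]; exact hπb1.symm
    have hlb1 : (1:ℝ) ≤ ρ 1 := by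
      apply hlb 1 ⟨zero_le_one, le_refl 1⟩
      intro s hs
      obtain ⟨g, hg, hsum, rfl⟩ := hs
      have h1 : ∑ i ∈ Finset.range n, πb i * (1 - g i)
          = 1 - ∑ i ∈ Finset.range n, πb i * g i := by
        have e : ∑ i ∈ Finset.range n, πb i * (1 - g i)
            = ∑ i ∈ Finset.range n, πb i - ∑ i ∈ Finset.range n, πb i * g i := by
          rw [← Finset.sum_sub_distrib]
          exact Finset.sum_congr rfl fun i _ => by ring
        rw [e, hπb1]
      have h2 : ∑ i ∈ Finset.range n, πb i * (1 - g i)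
          ≤ ∑ i ∈ Finset.range n, R * (π i * (1 - g i)) := by
        apply Finset.sum_le_sum
        intro i hi
        have hi' := Finset.mem_range.1 hi
        rw [← mul_assoc]
        exact mul_le_mul_of_nonneg_right (hRpi i hi') (by linarith [(hg i hi').2])
      have h3 : ∑ i ∈ Finset.range n, R * (π i * (1 - g i)) = 0 := by
        rw [← Finset.mul_sum]
        have : ∑ i ∈ Finset.range n, π i * (1 - g i)
            = ∑ i ∈ Finset.range n, π i - ∑ i ∈ Finset.range n, π i * g i := by
          rw [← Finset.sum_sub_distrib]
          exact Finset.sum_congr rfl fun i _ => by ring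
        rw [this, hπ1, hsum]; ring
      linarith
    linarith
  have h01 : (0:ℝ) ∈ Set.Icc (0:ℝ) 1 := ⟨le_refl 0, zero_le_one⟩
  have h11 : (1:ℝ) ∈ Set.Icc (0:ℝ) 1 := ⟨zero_le_one, le_refl 1⟩
  refine ⟨?_, hstrict'.injOn, ?_⟩
  · intro p hp
    exact ⟨hge0 p hp, (hmono hp h11 hp.2).trans_eq hρ1⟩
  · intro y hy
    have := intermediate_value_Icc (zero_le_one) hcont
    rw [hρ0, hρ1] at this
    exact this hy
end

section
/- Let φ be the discrete randomization on X = {0, 1/K, …, 1}^d with parameters α, β = (1−α)/K. For r ∈ {0, 1, …, d}, let x_C = (0,…,0) and x̄_C have its first r coordinates equal to 1 and the rest 0. Then for any x, x̄ ∈ X with ‖x − x̄‖₀ = r and any u, v ∈ {0,…,d}, the cardinality of {z ∈ X : ‖z − x‖₀ = u, ‖z − x̄‖₀ = v} equals the cardinality of {z ∈ X : ‖z − x_C‖₀ = u, ‖z − x̄_C‖₀ = v}, and consequently Pr(φ(x) ∈ L(u,v)) and Pr(φ(x̄) ∈ L(u,v)) depend only on r (not on the particular pair x, x̄). -/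
/-- Probability mass of the discrete randomization `φ` of Eq. (6). -/
noncomputable def discreteProb {d K : ℕ} (α β : ℝ)
    (x z : Fin d → Fin (K + 1)) : ℝ :=
  ∏ i, (if z i = x i then α else β)

/-- Hamming distance on `{0,…,K}^d`. -/
def ham {d K : ℕ} (x z : Fin d → Fin (K + 1)) : ℕ :=
  (Finset.univ.filter fun i => z i ≠ x i).card

/-!
Coordinate permutations composed with coordinatewise relabellings of the values act on
`{0,…,K}^d`, preserving both the Hamming distance and the mass `discreteProb` of the
randomization. Two pairs at the same Hamming distance are related by such a map: send the
coordinates where the canonical pair differs onto those where `x, x̄` differ, and in each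
coordinate relabel the values. Transporting `L(u,v)` along it gives the theorem.
-/

open Finset Equiv

lemma Equiv.Perm.exists_apply_eq_pair {α : Type*} [DecidableEq α] {a b c e : α}
    (h : a = b ↔ c = e) : ∃ σ : Perm α, σ a = c ∧ σ b = e := by
  refine ⟨(swap a c).trans (swap (swap a c b) e), ?_, by simp⟩
  rw [trans_apply, swap_apply_left]
  by_cases hab : a = b
  · subst hab
    simp [h.mp rfl]
  · refine swap_apply_of_ne_of_ne ?_ fun hce => hab (h.mpr hce)
    exact fun hb => hab ((swap a c).injective ((swap_apply_left a c).trans hb))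

section Hamming

variable {d K : ℕ}

def hammingAut (π : Perm (Fin d)) (g : Fin d → Perm (Fin (K + 1))) :
    Perm (Fin d → Fin (K + 1)) where
  toFun z i := g i (z (π i))
  invFun w j := (g (π.symm j)).symm (w (π.symm j))
  left_inv z := by funext j; simp
  right_inv w := by funext i; simp

variable (π : Perm (Fin d)) (g : Fin d → Perm (Fin (K + 1)))

lemma hammingAut_apply (z : Fin d → Fin (K + 1)) (i : Fin d) :
    hammingAut π g z i = g i (z (π i)) := rfl

lemma ham_hammingAut (x z : Fin d → Fin (K + 1)) :
    ham (hammingAut π g x) (hammingAut π g z) = ham x z := by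
  simp only [ham, card_filter, hammingAut_apply, ne_eq, EmbeddingLike.apply_eq_iff_eq]
  exact Equiv.sum_comp π fun j => if z j ≠ x j then 1 else 0

lemma discreteProb_hammingAut (α β : ℝ) (x z : Fin d → Fin (K + 1)) :
    discreteProb α β (hammingAut π g x) (hammingAut π g z) = discreteProb α β x z := by
  simp only [discreteProb, hammingAut_apply, EmbeddingLike.apply_eq_iff_eq]
  exact Equiv.prod_comp π fun j => if z j = x j then α else β

lemma exists_hammingAut_apply_pair {x xb y yb : Fin d → Fin (K + 1)}
    (h : ham x xb = ham y yb) :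
    ∃ π g, hammingAut π g x = y ∧ hammingAut π g xb = yb := by
  have hcard : Fintype.card {i // yb i ≠ y i} = Fintype.card {j // xb j ≠ x j} := by
    simpa only [Fintype.card_subtype, ham] using h.symm
  set e := Fintype.equivOfCardEq hcard
  set π := e.extendSubtype
  have hπ : ∀ i, xb (π i) = x (π i) ↔ yb i = y i := fun i => by
    by_cases hi : yb i = y i
    · simpa [hi] using e.extendSubtype_not_mem i (not_not.mpr hi)
    · simpa [hi] using e.extendSubtype_mem i hi
  choose g hg using fun i => Perm.exists_apply_eq_pair (eq_comm.trans ((hπ i).trans eq_comm))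
  exact ⟨π, g, funext fun i => (hg i).1, funext fun i => (hg i).2⟩

def hamRegion (x xb : Fin d → Fin (K + 1)) (u v : ℕ) : Finset (Fin d → Fin (K + 1)) :=
  univ.filter fun z => ham x z = u ∧ ham xb z = v

lemma mem_hamRegion_hammingAut {x xb z : Fin d → Fin (K + 1)} {u v : ℕ} :
    hammingAut π g z ∈ hamRegion (hammingAut π g x) (hammingAut π g xb) u v ↔
      z ∈ hamRegion x xb u v := by
  simp only [hamRegion, mem_filter, mem_univ, true_and, ham_hammingAut]

lemma card_hamRegion_hammingAut (x xb : Fin d → Fin (K + 1)) (u v : ℕ) :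
    #(hamRegion (hammingAut π g x) (hammingAut π g xb) u v) = #(hamRegion x xb u v) :=
  (card_equiv (hammingAut π g) fun _ => (mem_hamRegion_hammingAut π g).symm).symm

lemma sum_hamRegion_hammingAut {M : Type*} [AddCommMonoid M] (x xb : Fin d → Fin (K + 1))
    (u v : ℕ) (f : (Fin d → Fin (K + 1)) → M) :
    ∑ z ∈ hamRegion (hammingAut π g x) (hammingAut π g xb) u v, f z =
      ∑ z ∈ hamRegion x xb u v, f (hammingAut π g z) :=
  (sum_equiv (hammingAut π g) (fun _ => (mem_hamRegion_hammingAut π g).symm)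
    fun _ _ => rfl).symm

end Hamming

lemma ham_zero_indicator {d K r : ℕ} (hK : 1 ≤ K) (hr : r ≤ d) :
    ham (fun _ : Fin d => (0 : Fin (K + 1))) (fun i => if (i : ℕ) < r then 1 else 0) = r := by
  have hone : (1 : Fin (K + 1)) ≠ 0 := by
    simp [Fin.ext_iff, Nat.mod_eq_of_lt (Nat.lt_succ_of_le hK)]
  simp only [ham, ne_eq, ite_eq_right_iff, hone, imp_false, not_not]
  rw [Fin.card_filter_val_lt, min_eq_right hr]

theorem stmt_9_general (d K : ℕ) (hK : 1 ≤ K) (α : ℝ)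
    (r : ℕ) (hr : r ≤ d) (x xb : Fin d → Fin (K + 1)) (hxxb : ham x xb = r)
    (u v : ℕ) :
    (Finset.univ.filter fun z : Fin d → Fin (K + 1) =>
        ham x z = u ∧ ham xb z = v).card
      = (Finset.univ.filter fun z : Fin d → Fin (K + 1) =>
          ham (fun _ => 0) z = u
            ∧ ham (fun i => if (i : ℕ) < r then 1 else 0) z = v).card
    ∧ (∑ z ∈ Finset.univ.filter fun z : Fin d → Fin (K + 1) =>
          ham x z = u ∧ ham xb z = v, discreteProb α ((1 - α) / K) x z)
      = (∑ z ∈ Finset.univ.filter fun z : Fin d → Fin (K + 1) =>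
          ham (fun _ => 0) z = u
            ∧ ham (fun i => if (i : ℕ) < r then 1 else 0) z = v,
          discreteProb α ((1 - α) / K) (fun _ => 0) z)
    ∧ (∑ z ∈ Finset.univ.filter fun z : Fin d → Fin (K + 1) =>
          ham x z = u ∧ ham xb z = v, discreteProb α ((1 - α) / K) xb z)
      = (∑ z ∈ Finset.univ.filter fun z : Fin d → Fin (K + 1) =>
          ham (fun _ => 0) z = u
            ∧ ham (fun i => if (i : ℕ) < r then 1 else 0) z = v,
          discreteProb α ((1 - α) / K)
            (fun i => if (i : ℕ) < r then 1 else 0) z) := by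
  obtain ⟨π, g, hx, hxb⟩ :=
    exists_hammingAut_apply_pair (hxxb.trans (ham_zero_indicator hK hr).symm)
  change #(hamRegion x xb u v) = #(hamRegion _ _ u v) ∧
    ∑ z ∈ hamRegion x xb u v, _ = ∑ z ∈ hamRegion _ _ u v, _ ∧
    ∑ z ∈ hamRegion x xb u v, _ = ∑ z ∈ hamRegion _ _ u v, _
  simp only [← hx, ← hxb, card_hamRegion_hammingAut, sum_hamRegion_hammingAut,
    discreteProb_hammingAut, and_self]

/-- Lemma 2 (canonical-form reduction): for any `x, x̄` at Hamming distance
`r`, the region `L(u,v) = {z : ‖z−x‖₀ = u, ‖z−x̄‖₀ = v}` has the same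
cardinality as for the canonical pair `x_C = 0`,
`x̄_C = (1,…,1,0,…,0)` with `r` ones, and consequently the probabilities
`Pr(φ(x) ∈ L(u,v))` and `Pr(φ(x̄) ∈ L(u,v))` depend only on `r`. -/
theorem stmt_9 (d K : ℕ) (hK : 1 ≤ K) (α : ℝ) (hα : α ∈ Set.Ioo (0 : ℝ) 1)
    (r : ℕ) (hr : r ≤ d) (x xb : Fin d → Fin (K + 1)) (hxxb : ham x xb = r)
    (u v : ℕ) :
    (Finset.univ.filter fun z : Fin d → Fin (K + 1) =>
        ham x z = u ∧ ham xb z = v).card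
      = (Finset.univ.filter fun z : Fin d → Fin (K + 1) =>
          ham (fun _ => 0) z = u
            ∧ ham (fun i => if (i : ℕ) < r then 1 else 0) z = v).card
    ∧ (∑ z ∈ Finset.univ.filter fun z : Fin d → Fin (K + 1) =>
          ham x z = u ∧ ham xb z = v, discreteProb α ((1 - α) / K) x z)
      = (∑ z ∈ Finset.univ.filter fun z : Fin d → Fin (K + 1) =>
          ham (fun _ => 0) z = u
            ∧ ham (fun i => if (i : ℕ) < r then 1 else 0) z = v,
          discreteProb α ((1 - α) / K) (fun _ => 0) z)
    ∧ (∑ z ∈ Finset.univ.filter fun z : Fin d → Fin (K + 1) =>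
          ham x z = u ∧ ham xb z = v, discreteProb α ((1 - α) / K) xb z)
      = (∑ z ∈ Finset.univ.filter fun z : Fin d → Fin (K + 1) =>
          ham (fun _ => 0) z = u
            ∧ ham (fun i => if (i : ℕ) < r then 1 else 0) z = v,
          discreteProb α ((1 - α) / K)
            (fun i => if (i : ℕ) < r then 1 else 0) z) :=
  stmt_9_general d K hK α r hr x xb hxxb u v
end

section
/- Let K ≥ 1, d ≥ 1, 0 ≤ r ≤ d, and u, v ∈ {0,…,d} with u ≤ v. Let x_C = 0 ∈ {0,…,K}^d and x̄_C be the vector with first r coordinates equal to 1 and rest 0. Then the number of z ∈ {0,…,K}^d with ‖z − x_C‖₀ = u and ‖z − x̄_C‖₀ = v equals ∑_{i = max(0, v−r)}^{min(u, d−r, ⌊(u+v−r)/2⌋)} [ (K−1)^{j*} · r! / ((u−i−j*)! (v−i−j*)! j*!) ] · [ K^i (d−r)! / ((d−r−i)! i!) ], where j* = u + v − 2i − r. Moreover this count is symmetric in u and v. -/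
open Finset Fintype
open scoped Nat

section FiberCounts

variable {ι α : Type*} [Fintype ι] [DecidableEq α]

theorem hammingDist_const_eq (w : ι → α) (a : α) :
    hammingDist w (fun _ => a) = card ι - #{j | w j = a} := by
  rw [hammingDist, ← card_univ, ← card_filter_add_card_filter_not (s := univ) fun j => w j = a]
  simp

theorem card_le_hammingDist_const_add {a b : α} (hab : a ≠ b) (w : ι → α) :
    card ι ≤ hammingDist w (fun _ => a) + hammingDist w (fun _ => b) := by
  have hab' : hammingDist (fun _ : ι => a) (fun _ => b) = card ι := by simp [hammingDist, hab]
  exact hab' ▸ hammingDist_triangle_left _ _ w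

variable [DecidableEq ι] [Fintype α]

theorem card_filter_setOf_ne_eq (x : ι → α) (s : Finset ι) :
    #{w : ι → α | ({j | w j ≠ x j} : Finset ι) = s} = (card α - 1) ^ #s := by
  have hpi : ({w : ι → α | ({j | w j ≠ x j} : Finset ι) = s} : Finset _)
      = piFinset fun j => if j ∈ s then univ.erase (x j) else {x j} := by
    ext w
    simp only [mem_filter, mem_univ, true_and, Finset.ext_iff, mem_piFinset]
    refine forall_congr' fun j => ?_
    split_ifs with hj <;> simp [hj]
  rw [hpi, card_piFinset]
  simp_rw [apply_ite card, card_erase_of_mem (mem_univ _), card_univ, card_singleton]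
  rw [Fintype.prod_ite_mem, prod_const]

theorem card_filter_hammingDist_eq (x : ι → α) (i : ℕ) :
    #{w : ι → α | hammingDist w x = i} = (card ι).choose i * (card α - 1) ^ i := by
  rw [card_eq_sum_card_fiberwise (s := {w : ι → α | hammingDist w x = i})
    (f := fun w : ι → α => ({j | w j ≠ x j} : Finset ι)) (t := powersetCard i univ)
    fun w hw => mem_powersetCard_univ.2 (mem_filter.1 hw).2]
  have hfiber : ∀ s ∈ powersetCard i (univ : Finset ι),
      #{w ∈ ({w : ι → α | hammingDist w x = i} : Finset _) |
          ({j | w j ≠ x j} : Finset ι) = s}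
        = (card α - 1) ^ i := by
    intro s hs
    rw [filter_filter, ← (mem_powersetCard_univ.1 hs), ← card_filter_setOf_ne_eq x s]
    congr 1
    refine filter_congr fun w _ => and_iff_right_of_imp fun hw => ?_
    rw [hammingDist, hw]
  rw [sum_congr rfl hfiber, sum_const, card_powersetCard, card_univ, smul_eq_mul]

theorem card_filter_setOf_eq_pair {a b : α} (hab : a ≠ b) {s t : Finset ι}
    (hst : Disjoint s t) :
    #{w : ι → α | ({j | w j = a} : Finset ι) = s ∧ ({j | w j = b} : Finset ι) = t}
      = (card α - 2) ^ (card ι - #s - #t) := by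
  have hpi : ({w : ι → α | ({j | w j = a} : Finset ι) = s ∧ ({j | w j = b} : Finset ι) = t}
        : Finset _)
      = piFinset fun j => if j ∈ s then {a} else if j ∈ t then {b} else {a, b}ᶜ := by
    ext w
    simp only [mem_filter, mem_univ, true_and, Finset.ext_iff, mem_piFinset, ← forall_and]
    refine forall_congr' fun j => ?_
    have hj : j ∈ s → j ∉ t := fun h => disjoint_left.1 hst h
    split_ifs with hs ht <;> simp [hs, hj] <;> grind
  have hcard : ∀ j, #(if j ∈ s then {a} else if j ∈ t then {b} else ({a, b}ᶜ : Finset α))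
      = if j ∈ (s ∪ t)ᶜ then card α - 2 else 1 := by
    have hab' : #({a, b}ᶜ : Finset α) = card α - 2 := by rw [card_compl, card_pair hab]
    intro j
    by_cases hs : j ∈ s <;> by_cases ht : j ∈ t <;> simp only [hs, ht, hab', mem_compl,
      mem_union, if_true, if_false, card_singleton, or_true, or_false, not_true,
      not_false_eq_true]
  rw [hpi, card_piFinset, Fintype.prod_congr _ _ hcard, Fintype.prod_ite_mem, prod_const,
    card_compl, card_union_of_disjoint hst, Nat.sub_sub]

theorem card_filter_card_eq_pair {a b : α} (hab : a ≠ b) (p q : ℕ) :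
    #{w : ι → α | #{j | w j = a} = p ∧ #{j | w j = b} = q}
      = (card ι).choose p * (card ι - p).choose q * (card α - 2) ^ (card ι - p - q) := by
  set T := (powersetCard p (univ : Finset ι)).sigma fun s => powersetCard q sᶜ
  set S : Finset (ι → α) := {w | #{j | w j = a} = p ∧ #{j | w j = b} = q}
  set F : (ι → α) → Σ _ : Finset ι, Finset ι :=
    fun w => ⟨({j | w j = a} : Finset ι), ({j | w j = b} : Finset ι)⟩
  have hmaps : ∀ w ∈ S, F w ∈ T := by
    intro w hw
    simp only [S, mem_filter, mem_univ, true_and] at hw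
    simp only [T, F, mem_sigma]
    rw [mem_powersetCard_univ, mem_powersetCard]
    refine ⟨hw.1, fun j hj => ?_, hw.2⟩
    simp only [mem_filter, mem_univ, true_and, mem_compl] at hj ⊢
    rw [hj]
    exact hab.symm
  rw [card_eq_sum_card_fiberwise hmaps]
  have hfiber : ∀ st ∈ T, #{w ∈ S | F w = st} = (card α - 2) ^ (card ι - p - q) := by
    rintro ⟨s, t⟩ hst
    simp only [T, mem_sigma] at hst
    rw [mem_powersetCard_univ, mem_powersetCard] at hst
    obtain ⟨hs, hts, ht⟩ := hst
    subst hs ht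
    rw [← card_filter_setOf_eq_pair hab
      (disjoint_right.2 fun j hj => mem_compl.1 (hts hj)), filter_filter]
    congr 1
    refine filter_congr fun w _ => ?_
    simp only [F, Sigma.mk.inj_iff, heq_eq_eq]
    constructor
    · exact fun h => h.2
    · rintro ⟨rfl, rfl⟩
      exact ⟨⟨rfl, rfl⟩, rfl, rfl⟩
  have hinner : ∀ s ∈ powersetCard p (univ : Finset ι),
      #(powersetCard q sᶜ) = (card ι - p).choose q := by
    intro s hs
    rw [card_powersetCard, card_compl, mem_powersetCard_univ.1 hs]
  rw [sum_congr rfl hfiber, sum_const, smul_eq_mul, Finset.card_sigma, sum_congr rfl hinner,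
    sum_const, smul_eq_mul, card_powersetCard, card_univ]

theorem card_filter_hammingDist_const_pair {a b : α} (hab : a ≠ b) {u v : ℕ}
    (hu : u ≤ card ι) (hv : v ≤ card ι) :
    #{w : ι → α | hammingDist w (fun _ => a) = u ∧ hammingDist w (fun _ => b) = v}
      = (card ι).choose (card ι - u) * u.choose (card ι - v)
          * (card α - 2) ^ (u + v - card ι) := by
  have hfilter : ({w : ι → α | hammingDist w (fun _ => a) = u ∧ hammingDist w (fun _ => b) = v}
      : Finset (ι → α))
        = ({w | #{j | w j = a} = card ι - u ∧ #{j | w j = b} = card ι - v}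
          : Finset (ι → α)) := by
    refine filter_congr fun w _ => ?_
    have ha : #{j | w j = a} ≤ card ι := card_le_univ _
    have hb : #{j | w j = b} ≤ card ι := card_le_univ _
    rw [hammingDist_const_eq, hammingDist_const_eq]
    omega
  rw [hfilter, card_filter_card_eq_pair hab, Nat.sub_sub_self hu,
    show u - (card ι - v) = u + v - card ι by omega]

theorem card_filter_hammingDist_swap (π : ι → Equiv.Perm α) {x y : ι → α}
    (hxy : ∀ j, π j (x j) = y j) (hyx : ∀ j, π j (y j) = x j) (u v : ℕ) :
    #{z : ι → α | hammingDist z x = u ∧ hammingDist z y = v}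
      = #{z : ι → α | hammingDist z x = v ∧ hammingDist z y = u} := by
  refine card_equiv (Equiv.piCongrRight π) fun z => ?_
  have hcomp : ∀ w : ι → α,
      hammingDist (Equiv.piCongrRight π z) (fun j => π j (w j)) = hammingDist z w :=
    fun w => hammingDist_comp (fun j => π j) fun j => (π j).injective
  have hx : hammingDist (Equiv.piCongrRight π z) x = hammingDist z y := by
    rw [← hcomp]; simp only [hyx]
  have hy : hammingDist (Equiv.piCongrRight π z) y = hammingDist z x := by
    rw [← hcomp]; simp only [hxy]
  simp only [mem_filter, mem_univ, true_and, hx, hy, and_comm]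

end FiberCounts

theorem Nat.mul_factorial_div_eq_mul_choose_mul_choose (c : ℕ) {p q j n : ℕ}
    (h : p + q + j = n) :
    c * n ! / (p ! * q ! * j !) = c * (n.choose p * (q + j).choose q) := by
  have hn : n ! = n.choose p * (q + j).choose q * (p ! * q ! * j !) := by
    rw [← Nat.choose_mul_factorial_mul_factorial (show p ≤ n by omega),
      show n - p = q + j by omega,
      ← Nat.choose_mul_factorial_mul_factorial (show q ≤ q + j by omega),
      Nat.add_sub_cancel_left]
    ring
  rw [hn, ← mul_assoc, Nat.mul_div_cancel _ (by positivity)]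

theorem Nat.mul_factorial_div_eq_mul_choose (c : ℕ) {i m : ℕ} (h : i ≤ m) :
    c * m ! / ((m - i)! * i !) = c * m.choose i := by
  rw [← Nat.choose_mul_factorial_mul_factorial h, mul_assoc, mul_comm i !, ← mul_assoc c,
    Nat.mul_div_cancel _ (by positivity)]

theorem card_filter_prod_add_eq_sum {β γ : Type*} [Fintype β] [Fintype γ] (f f' : β → ℕ)
    (g : γ → ℕ) {N : ℕ} (hg : ∀ c, g c ≤ N) (u v : ℕ) :
    #{p : β × γ | f p.1 + g p.2 = u ∧ f' p.1 + g p.2 = v}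
      = ∑ i ∈ range (N + 1), #{b | f b + i = u ∧ f' b + i = v} * #{c | g c = i} := by
  rw [card_eq_sum_card_fiberwise (f := fun p : β × γ => g p.2) (t := range (N + 1))
    fun p _ => mem_range.2 (Nat.lt_succ_of_le (hg p.2))]
  refine sum_congr rfl fun i _ => ?_
  rw [← card_product, filter_filter]
  congr 1
  ext ⟨b, c⟩
  simp only [mem_filter, mem_univ, true_and, mem_product]
  grind

section Append

variable {α : Type*}

theorem Fin.append_const_eq_ite {m n : ℕ} (a b : α) :
    Fin.append (fun _ : Fin m => b) (fun _ : Fin n => a)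
      = fun j : Fin (m + n) => if (j : ℕ) < m then b else a := by
  funext j
  refine Fin.addCases (fun k => ?_) (fun k => ?_) j <;> simp

variable [DecidableEq α]

theorem hammingDist_append {m n : ℕ} (x x' : Fin m → α) (y y' : Fin n → α) :
    hammingDist (Fin.append x y) (Fin.append x' y') = hammingDist x x' + hammingDist y y' := by
  simp only [hammingDist, card_filter]
  rw [Fin.sum_univ_add]
  simp only [Fin.append_left, Fin.append_right]

variable [Fintype α]

theorem card_filter_hammingDist_append_eq_sum {r m : ℕ} (x x' : Fin r → α) (y : Fin m → α)
    (u v : ℕ) :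
    #{z : Fin (r + m) → α | hammingDist z (Fin.append x y) = u
        ∧ hammingDist z (Fin.append x' y) = v}
      = ∑ i ∈ range (r + m + 1), #{w | hammingDist w x + i = u ∧ hammingDist w x' + i = v}
          * (m.choose i * (card α - 1) ^ i) := by
  rw [← card_equiv (Fin.appendEquiv r m)
    (s := {p | hammingDist p.1 x + hammingDist p.2 y = u
      ∧ hammingDist p.1 x' + hammingDist p.2 y = v})
    fun p => by simp [Fin.appendEquiv, hammingDist_append]]
  rw [card_filter_prod_add_eq_sum (fun w => hammingDist w x) (fun w => hammingDist w x')
    (fun c => hammingDist c y) (N := r + m) fun c => hammingDist_le_card_fintype.trans (by simp)]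
  simp only [card_filter_hammingDist_eq, Fintype.card_fin]

end Append

theorem filter_ham_eq {d K : ℕ} (x y : Fin d → Fin (K + 1)) (u v : ℕ) :
    (univ.filter fun z => ham x z = u ∧ ham y z = v)
      = ({z | hammingDist z x = u ∧ hammingDist z y = v} : Finset (Fin d → Fin (K + 1))) :=
  rfl

theorem card_filter_hammingDist_zero_one_mul_choose {K r m u v i : ℕ} (hK : 1 ≤ K)
    (huv : u ≤ v) :
    #{w : Fin r → Fin (K + 1) | hammingDist w (fun _ => 0) + i = u
        ∧ hammingDist w (fun _ => 1) + i = v} * (m.choose i * K ^ i)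
      = if v ≤ i + r ∧ i ≤ u ∧ i + r ≤ r + m ∧ 2 * i + r ≤ u + v then
          ((K - 1) ^ (u + v - 2 * i - r) * r !
              / ((u - i - (u + v - 2 * i - r))! * (v - i - (u + v - 2 * i - r))!
                  * (u + v - 2 * i - r)!))
            * (K ^ i * m ! / ((m - i)! * i !))
        else 0 := by
  have h01 : (0 : Fin (K + 1)) ≠ 1 := by
    simp [Fin.ext_iff, Nat.mod_eq_of_lt (show 1 < K + 1 by omega)]
  split_ifs with hg
  · obtain ⟨hvi, hiu, him, hsum⟩ := hg
    have hfilter : ({w : Fin r → Fin (K + 1) | hammingDist w (fun _ => 0) + i = u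
          ∧ hammingDist w (fun _ => 1) + i = v} : Finset (Fin r → Fin (K + 1)))
        = ({w | hammingDist w (fun _ => 1) = v - i ∧ hammingDist w (fun _ => 0) = u - i}
          : Finset (Fin r → Fin (K + 1))) :=
      filter_congr fun w _ => by
        constructor <;> rintro ⟨h0, h1⟩ <;> constructor <;> omega
    rw [hfilter, card_filter_hammingDist_const_pair h01.symm (by simp; omega) (by simp; omega),
      show u - i - (u + v - 2 * i - r) = r - (v - i) by omega,
      show v - i - (u + v - 2 * i - r) = r - (u - i) by omega,
      Nat.mul_factorial_div_eq_mul_choose_mul_choose _ (show _ = r by omega),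
      show r - (u - i) + (u + v - 2 * i - r) = v - i by omega,
      Nat.mul_factorial_div_eq_mul_choose _ (show i ≤ m by omega)]
    simp only [Fintype.card_fin, show K + 1 - 2 = K - 1 by omega,
      show v - i + (u - i) - r = u + v - 2 * i - r by omega]
    ring
  · by_cases him : i ≤ m
    · suffices hempty : ({w : Fin r → Fin (K + 1) | hammingDist w (fun _ => 0) + i = u
          ∧ hammingDist w (fun _ => 1) + i = v} : Finset (Fin r → Fin (K + 1))) = ∅ by
        rw [hempty, Finset.card_empty, zero_mul]
      refine filter_eq_empty_iff.2 fun w _ ⟨h0, h1⟩ => hg ?_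
      have hle : hammingDist w (fun _ => (1 : Fin (K + 1))) ≤ r :=
        hammingDist_le_card_fintype.trans (by simp)
      have hge := card_le_hammingDist_const_add h01 w
      rw [Fintype.card_fin] at hge
      omega
    · rw [Nat.choose_eq_zero_of_lt (by omega), zero_mul, mul_zero]

/-- The guard on `i` encodes the summation range `max(0, v−r) ≤ i ≤ min(u, d−r, ⌊(u+v−r)/2⌋)`;
within it all natural subtractions are exact and `j* = u + v − 2i − r`. -/
theorem stmt_10_general (K d r : ℕ) (hK : 1 ≤ K) (hr : r ≤ d)
    (u v : ℕ) (huv : u ≤ v) :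
    (Finset.univ.filter fun z : Fin d → Fin (K + 1) =>
        ham (fun _ => 0) z = u
          ∧ ham (fun i => if (i : ℕ) < r then 1 else 0) z = v).card
      = (∑ i ∈ Finset.range (d + 1),
          if v ≤ i + r ∧ i ≤ u ∧ i + r ≤ d ∧ 2 * i + r ≤ u + v then
            ((K - 1) ^ (u + v - 2 * i - r) * r.factorial
                / ((u - i - (u + v - 2 * i - r)).factorial
                    * (v - i - (u + v - 2 * i - r)).factorial
                    * (u + v - 2 * i - r).factorial))
              * (K ^ i * (d - r).factorial
                  / ((d - r - i).factorial * i.factorial))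
          else 0)
    ∧ (Finset.univ.filter fun z : Fin d → Fin (K + 1) =>
        ham (fun _ => 0) z = u
          ∧ ham (fun i => if (i : ℕ) < r then 1 else 0) z = v).card
      = (Finset.univ.filter fun z : Fin d → Fin (K + 1) =>
          ham (fun _ => 0) z = v
            ∧ ham (fun i => if (i : ℕ) < r then 1 else 0) z = u).card := by
  simp only [filter_ham_eq]
  refine ⟨?_, card_filter_hammingDist_swap
    (fun j : Fin d => if (j : ℕ) < r then Equiv.swap (0 : Fin (K + 1)) 1 else 1)
    (fun j => by split_ifs <;> simp) (fun j => by split_ifs <;> simp) u v⟩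
  obtain ⟨m, rfl⟩ := Nat.exists_eq_add_of_le hr
  have hzero : (fun _ : Fin (r + m) => (0 : Fin (K + 1)))
      = Fin.append (fun _ => 0) fun _ => 0 := by
    simp [Fin.append_const_eq_ite]
  rw [hzero, ← Fin.append_const_eq_ite, card_filter_hammingDist_append_eq_sum,
    Nat.add_sub_cancel_left]
  simp only [Fintype.card_fin, Nat.add_sub_cancel]
  exact sum_congr rfl fun i _ => card_filter_hammingDist_zero_one_mul_choose hK huv

/-- Lemma 3: the cardinality of the constant likelihood-ratio region
`L(u, v; r)` for the canonical pair `x_C = 0` and `x̄_C` (first `r`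
coordinates `1`, rest `0`), together with its symmetry in `u, v`.
The guard on `i` encodes the summation range
`max(0, v−r) ≤ i ≤ min(u, d−r, ⌊(u+v−r)/2⌋)`; within it, all natural
subtractions are exact and `j* = u + v − 2i − r`. -/
theorem stmt_10 (K d r : ℕ) (hK : 1 ≤ K) (hd : 1 ≤ d) (hr : r ≤ d)
    (u v : ℕ) (hu : u ≤ d) (hv : v ≤ d) (huv : u ≤ v) :
    (Finset.univ.filter fun z : Fin d → Fin (K + 1) =>
        ham (fun _ => 0) z = u
          ∧ ham (fun i => if (i : ℕ) < r then 1 else 0) z = v).card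
      = (∑ i ∈ Finset.range (d + 1),
          if v ≤ i + r ∧ i ≤ u ∧ i + r ≤ d ∧ 2 * i + r ≤ u + v then
            ((K - 1) ^ (u + v - 2 * i - r) * r.factorial
                / ((u - i - (u + v - 2 * i - r)).factorial
                    * (v - i - (u + v - 2 * i - r)).factorial
                    * (u + v - 2 * i - r).factorial))
              * (K ^ i * (d - r).factorial
                  / ((d - r - i).factorial * i.factorial))
          else 0)
    ∧ (Finset.univ.filter fun z : Fin d → Fin (K + 1) =>
        ham (fun _ => 0) z = u
          ∧ ham (fun i => if (i : ℕ) < r then 1 else 0) z = v).card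
      = (Finset.univ.filter fun z : Fin d → Fin (K + 1) =>
          ham (fun _ => 0) z = v
            ∧ ham (fun i => if (i : ℕ) < r then 1 else 0) z = u).card :=
  stmt_10_general K d r hK hr u v huv
end

section
/- Let Φ_σ denote the CDF of a Gaussian with mean 0 and variance σ². Let φ_G(x) = x + ε with ε_i i.i.d. N(0, σ²), and let ζ : ℝ^d → {0,1}^d be the coordinatewise thresholding ζ(w)_i = 1 if w_i > 0.5 else 0. Then for any x ∈ {0,1}^d, the random vector ζ(φ_G(x)) has the same distribution as the discrete randomization φ_D(x) on {0,1}^d with K = 1 and α = Φ_σ(0.5), i.e., each coordinate of ζ(φ_G(x)) independently equals x_i with probability Φ_σ(0.5) and 1 − x_i with probability 1 − Φ_σ(0.5). -/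
/-!
Thresholding acts coordinatewise, so it maps the product of the Gaussians to the product of
their images. For `x i = 0` the coordinate stays `0` with probability `Φ_σ(1/2)`; for `x i = 1`,
reflecting the Gaussian about the threshold `1/2` (which carries no mass) shows that it stays `1`
with the same probability.
-/

open MeasureTheory ProbabilityTheory Set
open scoped NNReal ENNReal

namespace MeasureTheory

variable {α : Type*} [MeasurableSpace α] {p : α → Prop} [DecidablePred p]

lemma measurable_decide_of_measurableSet (hp : MeasurableSet {a | p a}) :
    Measurable fun a => decide (p a) := by
  refine measurable_to_countable' fun b => ?_
  cases b
  · convert hp.compl using 1; ext; simp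
  · convert hp using 1; ext; simp

lemma Measure.map_decide (μ : Measure α) (hp : MeasurableSet {a | p a}) :
    μ.map (fun a => decide (p a))
      = μ {a | p a} • Measure.dirac true + μ {a | ¬p a} • Measure.dirac false := by
  refine Measure.ext_of_singleton fun b => ?_
  rw [Measure.map_apply (measurable_decide_of_measurableSet hp) (measurableSet_singleton b)]
  cases b <;> simp [preimage]

end MeasureTheory

namespace ProbabilityTheory

lemma gaussianReal_singleton_of_ne {μ c : ℝ} (v : ℝ≥0) (hc : c ≠ μ) :
    gaussianReal μ v {c} = 0 := by
  rcases eq_or_ne v 0 with rfl | hv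
  · simp [gaussianReal_zero_var, hc]
  · exact gaussianReal_absolutelyContinuous μ hv (measure_singleton c)

lemma gaussianReal_Ioi_eq_Iic_reflect {μ c : ℝ} (v : ℝ≥0) (hc : c ≠ μ) :
    gaussianReal μ v (Ioi c) = gaussianReal (2 * c - μ) v (Iic c) := by
  have hreflect : (gaussianReal (2 * c - μ) v).map (2 * c - ·) = gaussianReal μ v := by
    rw [gaussianReal_map_const_sub]; ring_nf
  have hpreimage : (2 * c - ·) ⁻¹' Ioi c = Iio c := by
    ext t; simp only [mem_preimage, mem_Ioi, mem_Iio]; constructor <;> intro h <;> linarith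
  rw [← hreflect, Measure.map_apply (by fun_prop) measurableSet_Ioi, hpreimage,
    measure_congr (Iio_ae_eq_Iic' (gaussianReal_singleton_of_ne v (by grind)))]

lemma map_decide_half_lt_gaussianReal (v : ℝ≥0) (b : Bool) :
    (gaussianReal (if b then 1 else 0) v).map (fun t => decide ((1 : ℝ) / 2 < t))
      = gaussianReal 0 v (Iic (1 / 2)) • Measure.dirac b
          + (1 - gaussianReal 0 v (Iic (1 / 2))) • Measure.dirac (!b) := by
  rw [Measure.map_decide _ measurableSet_Ioi, show {t : ℝ | ¬1 / 2 < t} = Iic (1 / 2) by ext; simp]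
  change gaussianReal _ v (Ioi (1 / 2)) • _ + _ = _
  cases b
  · rw [if_neg Bool.false_ne_true, ← compl_Iic, prob_compl_eq_one_sub measurableSet_Iic]
    exact add_comm _ _
  · have hIoi_one : gaussianReal 1 v (Ioi (1 / 2)) = gaussianReal 0 v (Iic (1 / 2)) := by
      rw [gaussianReal_Ioi_eq_Iic_reflect v (by norm_num)]; norm_num
    have hIic_one : gaussianReal 1 v (Iic (1 / 2)) = 1 - gaussianReal 1 v (Ioi (1 / 2)) := by
      rw [← prob_compl_eq_one_sub measurableSet_Ioi, compl_Ioi]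
    rw [if_pos rfl, hIic_one, hIoi_one]
    rfl

end ProbabilityTheory

theorem stmt_13_general (d : ℕ) (σ : ℝ≥0) (x : Fin d → Bool) :
    Measure.map (fun w : Fin d → ℝ => fun i => decide ((1 : ℝ) / 2 < w i))
        (Measure.pi fun i =>
          gaussianReal (if x i then 1 else 0) (σ ^ 2))
      = Measure.pi fun i =>
          gaussianReal 0 (σ ^ 2) (Set.Iic (1 / 2)) • Measure.dirac (x i)
            + (1 - gaussianReal 0 (σ ^ 2) (Set.Iic (1 / 2)))
                • Measure.dirac (!x i) := by
  have hthreshold : Measurable fun t : ℝ => decide ((1 : ℝ) / 2 < t) :=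
    measurable_decide_of_measurableSet measurableSet_Ioi
  have (i : Fin d) :=
    Measure.isProbabilityMeasure_map (μ := gaussianReal (if x i then 1 else 0) (σ ^ 2))
      hthreshold.aemeasurable
  rw [Measure.pi_map_pi fun i => hthreshold.aemeasurable]
  simp_rw [map_decide_half_lt_gaussianReal]

/-- Section 3.5: thresholding coordinatewise-Gaussian noise at `0.5` yields
exactly the discrete randomization on `{0,1}^d` with `K = 1` and
`α = Φ_σ(0.5)`: each coordinate independently equals `x i` with probability
`α` and `1 − x i` with probability `1 − α`. Booleans encode binary inputs
(`true ↦ 1`, `false ↦ 0`). -/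
theorem stmt_13 (d : ℕ) (σ : ℝ≥0) (hσ : 0 < σ) (x : Fin d → Bool) :
    Measure.map (fun w : Fin d → ℝ => fun i => decide ((1 : ℝ) / 2 < w i))
        (Measure.pi fun i =>
          gaussianReal (if x i then 1 else 0) (σ ^ 2))
      = Measure.pi fun i =>
          gaussianReal 0 (σ ^ 2) (Set.Iic (1 / 2)) • Measure.dirac (x i)
            + (1 - gaussianReal 0 (σ ^ 2) (Set.Iic (1 / 2)))
                • Measure.dirac (!x i) :=
  stmt_13_general d σ x
end

section
/- (Correctness of the dynamic program for tree adversaries.) In the setting of the restricted decision tree above (each coordinate used at most once in the tree), define adv[i, r] as the minimum over all x̄ differing from x in at most r coordinates among those appearing in the subtree rooted at i, of the smoothed prediction of subtree i at x̄. Then adv satisfies: adv[leaf, r] = leaf output, and adv[i, r] = min( min_{0 ≤ r̄ ≤ r} { w_R · adv[right[i], r̄] + w_L · adv[left[i], r − r̄] }, min_{0 ≤ r̄ ≤ r−1} { w_L · adv[right[i], r̄] + w_R · adv[left[i], r − 1 − r̄] } ), where w_R = α^{[x_{idx[i]}=1]} β^{[x_{idx[i]}=0]} and w_L = α^{[x_{idx[i]}=0]}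 β^{[x_{idx[i]}=1]}; moreover adv[root, r] equals min_{‖x̄ − x‖₀ ≤ r} E[f(φ(x̄))]. -/
/-- Binary decision trees over `{0,1}^d` with real-valued leaf outputs. -/
inductive BTree (d : ℕ) : Type
  | leaf (val : ℝ) : BTree d
  | node (idx : Fin d) (left right : BTree d) : BTree d

namespace BTree

/-- The tree output on input `z`: route right when the split
coordinate equals `1` (`true`). -/
def eval {d : ℕ} : BTree d → (Fin d → Bool) → ℝ
  | leaf v, _ => v
  | node i l r, z => if z i then eval r z else eval l z

/-- Multiset of split coordinates used in the tree. -/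
def indices {d : ℕ} : BTree d → Multiset (Fin d)
  | leaf _ => 0
  | node i l r => i ::ₘ (indices l + indices r)

/-- The smoothed prediction recursion of Eq. (8). -/
def pred {d : ℕ} (α β : ℝ) (x : Fin d → Bool) : BTree d → ℝ
  | leaf v => v
  | node i l r =>
      (if x i then α else β) * pred α β x r
        + (if x i then β else α) * pred α β x l

end BTree

/-- Probability mass of the binary discrete randomization. -/
noncomputable def flipProb {d : ℕ} (α β : ℝ) (x z : Fin d → Bool) : ℝ :=
  ∏ i, (if z i = x i then α else β)

/-- `adv[t, r]`: the minimum smoothed prediction of the subtree `t` over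
adversaries `x̄` that differ from `x` in at most `r` coordinates, all of
which appear in `t`. -/
noncomputable def advSem {d : ℕ} (α β : ℝ) (x : Fin d → Bool)
    (t : BTree d) (rr : ℕ) : ℝ :=
  sInf {s : ℝ | ∃ xb : Fin d → Bool,
    (Finset.univ.filter fun i => xb i ≠ x i).card ≤ rr ∧
    (∀ i, i ∉ t.indices → xb i = x i) ∧
    s = BTree.pred α β xb t}

/-!
Because no coordinate is used twice, the split coordinate of a node is independent, under the
randomization, of everything its subtrees read; this makes the expected tree output satisfy the
same recursion as `BTree.pred`. For the adversary, the coordinates of the two subtrees and the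
split coordinate are disjoint, so the perturbed coordinates of an adversary for the node split
into adversaries for the two subtrees plus possibly the split coordinate, whose flip swaps the
routing weights and costs one unit of budget; conversely such pieces glue back together, and
Hamming distances add over the pieces.
-/

open Finset Function

lemma hammingDist_eq_sum {ι : Type*} {β : ι → Type*} [Fintype ι] [∀ i, DecidableEq (β i)]
    (x y : ∀ i, β i) : hammingDist x y = ∑ i, if x i ≠ y i then 1 else 0 :=
  card_filter _ _

lemma Equiv.funSplitAt_symm_eq_update {ι κ : Type*} [DecidableEq ι] (i : ι) (b c : κ)
    (w : {j // j ≠ i} → κ) :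
    (Equiv.funSplitAt i κ).symm (b, w) = update ((Equiv.funSplitAt i κ).symm (c, w)) i b := by
  funext j
  by_cases hj : j = i
  · subst hj; simp
  · simp [hj]

lemma exists_sum_apply_mul_eq_sum_mul {ι κ R : Type*} [Fintype ι] [DecidableEq ι] [Fintype κ]
    [Nonempty κ] [CommSemiring R] (i : ι) (G : (ι → κ) → R)
    (hG : ∀ z c, G (update z i c) = G z) :
    ∃ K : R, ∀ F : κ → R, ∑ z, F (z i) * G z = (∑ b, F b) * K := by
  obtain ⟨c⟩ := ‹Nonempty κ›
  refine ⟨∑ w, G ((Equiv.funSplitAt i κ).symm (c, w)), fun F => ?_⟩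
  rw [← (Equiv.funSplitAt i κ).symm.sum_comp, Fintype.sum_prod_type, sum_mul]
  refine sum_congr rfl fun b _ => ?_
  rw [mul_sum]
  refine sum_congr rfl fun w _ => ?_
  rw [Equiv.funSplitAt_symm_eq_update i b c, hG]
  simp

section FlipProb

variable {d : ℕ} (α : ℝ) (xb : Fin d → Bool)

lemma sum_flipProb : ∑ z, flipProb α (1 - α) xb z = 1 := by
  simp only [flipProb]
  rw [← Fintype.prod_sum (fun j (c : Bool) => if c = xb j then α else 1 - α)]
  refine prod_eq_one fun j _ => ?_
  cases xb j <;> simp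

lemma flipProb_eq_mul_prod_ne (z : Fin d → Bool) (β : ℝ) (i : Fin d) :
    flipProb α β xb z
      = (if z i = xb i then α else β) * ∏ j : {j // j ≠ i}, (if z j = xb j then α else β) :=
  Fintype.prod_eq_mul_prod_subtype_ne _ i

/-- Under `flipProb`, coordinate `i` is independent of every function that ignores it. -/
lemma sum_flipProb_mul_apply_mul (i : Fin d) (h : Bool → ℝ) (G : (Fin d → Bool) → ℝ)
    (hG : ∀ z c, G (update z i c) = G z) :
    ∑ z, flipProb α (1 - α) xb z * (h (z i) * G z)
      = (∑ b, (if b = xb i then α else 1 - α) * h b)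
          * ∑ z, flipProb α (1 - α) xb z * G z := by
  set p : Bool → ℝ := fun b => if b = xb i then α else 1 - α
  set Q : (Fin d → Bool) → ℝ := fun z => ∏ j : {j // j ≠ i}, (if z j = xb j then α else 1 - α)
  have hQ : ∀ z c, Q (update z i c) = Q z := fun z c =>
    prod_congr rfl fun j _ => by rw [update_of_ne j.2]
  obtain ⟨K, hK⟩ := exists_sum_apply_mul_eq_sum_mul i (Q * G)
    fun z c => by simp only [Pi.mul_apply, hQ, hG]
  have hsplit : ∀ F : Bool → ℝ, ∑ z, flipProb α (1 - α) xb z * (F (z i) * G z)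
      = ∑ z, (p * F) (z i) * (Q * G) z := fun F =>
    sum_congr rfl fun z _ => by
      rw [flipProb_eq_mul_prod_ne α xb z _ i]; simp only [Pi.mul_apply]; ring
  have hE : ∑ z, flipProb α (1 - α) xb z * G z = K := by
    have hp : ∑ b, p b = 1 := by cases h : xb i <;> simp [p, h]
    simpa only [hK, mul_one, hp, one_mul, Pi.one_apply] using hsplit 1
  rw [hsplit h, hK, hE]
  rfl

end FlipProb

namespace BTree

variable {d : ℕ}

lemma eval_congr {z z' : Fin d → Bool} :
    ∀ t : BTree d, (∀ j ∈ t.indices, z j = z' j) → t.eval z = t.eval z'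
  | leaf _, _ => rfl
  | node i l r, h => by
    simp only [indices, Multiset.mem_cons, Multiset.mem_add] at h
    simp only [eval, h i (Or.inl rfl), eval_congr l fun j hj => h j (.inr (.inl hj)),
      eval_congr r fun j hj => h j (.inr (.inr hj))]

lemma pred_congr (α β : ℝ) {y y' : Fin d → Bool} :
    ∀ t : BTree d, (∀ j ∈ t.indices, y j = y' j) → t.pred α β y = t.pred α β y'
  | leaf _, _ => rfl
  | node i l r, h => by
    simp only [indices, Multiset.mem_cons, Multiset.mem_add] at h
    simp only [pred, h i (Or.inl rfl), pred_congr α β l fun j hj => h j (.inr (.inl hj)),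
      pred_congr α β r fun j hj => h j (.inr (.inr hj))]

lemma eval_update_of_notMem {t : BTree d} {i : Fin d} (hi : i ∉ t.indices) (z : Fin d → Bool)
    (c : Bool) : t.eval (update z i c) = t.eval z :=
  eval_congr t fun _ hj => update_of_ne (ne_of_mem_of_not_mem hj hi) _ _

lemma nodup_indices_node {i : Fin d} {l r : BTree d} (h : (node i l r).indices.Nodup) :
    i ∉ l.indices ∧ i ∉ r.indices ∧ Disjoint l.indices r.indices ∧
      l.indices.Nodup ∧ r.indices.Nodup := by
  simp only [indices, Multiset.nodup_cons, Multiset.mem_add, not_or, Multiset.nodup_add] at h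
  exact ⟨h.1.1, h.1.2, h.2.2.2, h.2.1, h.2.2.1⟩

lemma sum_flipProb_mul_eval (α : ℝ) (y : Fin d → Bool) :
    ∀ t : BTree d, t.indices.Nodup →
      ∑ z, flipProb α (1 - α) y z * t.eval z = t.pred α (1 - α) y
  | leaf v, _ => by simp only [eval, pred, ← sum_mul, sum_flipProb, one_mul]
  | node i l r, h => by
    obtain ⟨hil, hir, -, hl, hr⟩ := nodup_indices_node h
    have hsum : ∀ z, flipProb α (1 - α) y z * (node i l r).eval z
        = flipProb α (1 - α) y z * ((if z i then 1 else 0) * r.eval z)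
          + flipProb α (1 - α) y z * ((if z i then 0 else 1) * l.eval z) := by
      intro z; cases hz : z i <;> simp [eval, hz]
    rw [sum_congr rfl fun z _ => hsum z, sum_add_distrib,
      sum_flipProb_mul_apply_mul α y i (fun b => if b then 1 else 0) _
        (eval_update_of_notMem hir),
      sum_flipProb_mul_apply_mul α y i (fun b => if b then 0 else 1) _
        (eval_update_of_notMem hil),
      sum_flipProb_mul_eval α y r hr, sum_flipProb_mul_eval α y l hl]
    cases hy : y i <;> simp [pred, hy]

def restrict (t : BTree d) (y x : Fin d → Bool) : Fin d → Bool :=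
  fun j => if j ∈ t.indices then y j else x j

lemma restrict_of_mem {t : BTree d} {j : Fin d} (hj : j ∈ t.indices) (y x : Fin d → Bool) :
    t.restrict y x j = y j :=
  if_pos hj

lemma restrict_of_notMem {t : BTree d} {j : Fin d} (hj : j ∉ t.indices) (y x : Fin d → Bool) :
    t.restrict y x j = x j :=
  if_neg hj

lemma pred_restrict (α β : ℝ) (t : BTree d) (y x : Fin d → Bool) :
    t.pred α β (t.restrict y x) = t.pred α β y :=
  pred_congr α β t fun _ hj => if_pos hj

lemma hammingDist_restrict_le (t : BTree d) (y x : Fin d → Bool) :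
    hammingDist (t.restrict y x) x ≤ hammingDist y x := by
  simp only [hammingDist_eq_sum]
  refine sum_le_sum fun j _ => ?_
  unfold BTree.restrict
  split_ifs <;> simp_all

lemma hammingDist_update_restrict_le (t : BTree d) (i : Fin d) (b : Bool)
    (y y' x : Fin d → Bool) :
    hammingDist (update (t.restrict y y') i b) x
      ≤ hammingDist y x + hammingDist y' x + (if b = x i then 0 else 1) := by
  have hcost : (if b = x i then 0 else 1)
      = ∑ j, if j = i then (if b = x i then 0 else 1) else 0 := by simp
  simp only [hammingDist_eq_sum]
  rw [hcost]
  simp only [← sum_add_distrib]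
  refine sum_le_sum fun j _ => ?_
  unfold BTree.restrict
  by_cases hj : j = i
  · subst hj; simp only [update_self]; split_ifs <;> simp_all
  · simp only [update_of_ne hj, hj]; split_ifs <;> simp_all

lemma hammingDist_restrict_add_restrict_le {i : Fin d} {l r : BTree d}
    (h : (node i l r).indices.Nodup) (y x : Fin d → Bool) :
    hammingDist (r.restrict y x) x + hammingDist (l.restrict y x) x
        + (if y i = x i then 0 else 1) ≤ hammingDist y x := by
  obtain ⟨hil, hir, hlr, -, -⟩ := nodup_indices_node h
  have hcost : (if y i = x i then 0 else 1)
      = ∑ j, if j = i then (if y i = x i then 0 else 1) else 0 := by simp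
  simp only [hammingDist_eq_sum]
  rw [hcost]
  simp only [← sum_add_distrib]
  refine sum_le_sum fun j _ => ?_
  unfold BTree.restrict
  by_cases hj : j = i
  · subst hj; simp [hil, hir]
  · have hjlr : j ∈ l.indices → j ∉ r.indices := Multiset.disjoint_left.mp hlr
    simp only [hj]; split_ifs <;> simp_all

end BTree

open BTree

section Adversary

variable {d : ℕ} {α β : ℝ} {x : Fin d → Bool}

def advSet (α β : ℝ) (x : Fin d → Bool) (t : BTree d) (rr : ℕ) : Set ℝ :=
  {s | ∃ y, hammingDist y x ≤ rr ∧ (∀ j ∉ t.indices, y j = x j) ∧ s = t.pred α β y}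

lemma advSem_eq_sInf_advSet (α β : ℝ) (x : Fin d → Bool) (t : BTree d) (rr : ℕ) :
    advSem α β x t rr = sInf (advSet α β x t rr) :=
  rfl

lemma advSet_finite (α β : ℝ) (x : Fin d → Bool) (t : BTree d) (rr : ℕ) :
    (advSet α β x t rr).Finite :=
  (Set.finite_range fun y => t.pred α β y).subset <| by rintro _ ⟨y, -, -, rfl⟩; exact ⟨y, rfl⟩

lemma advSem_le_pred {t : BTree d} {rr : ℕ} {y : Fin d → Bool} (hy : hammingDist y x ≤ rr)
    (hyt : ∀ j ∉ t.indices, y j = x j) : advSem α β x t rr ≤ t.pred α β y :=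
  csInf_le (advSet_finite α β x t rr).bddBelow ⟨y, hy, hyt, rfl⟩

lemma exists_pred_eq_advSem (α β : ℝ) (x : Fin d → Bool) (t : BTree d) (rr : ℕ) :
    ∃ y, hammingDist y x ≤ rr ∧ (∀ j ∉ t.indices, y j = x j) ∧
      t.pred α β y = advSem α β x t rr := by
  have hne : (advSet α β x t rr).Nonempty :=
    ⟨t.pred α β x, x, by simp, fun _ _ => rfl, rfl⟩
  obtain ⟨y, hy, hyt, hs⟩ := hne.csInf_mem (advSet_finite α β x t rr)
  exact ⟨y, hy, hyt, hs.symm⟩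

lemma advSem_leaf (v : ℝ) (rr : ℕ) : advSem α β x (leaf v) rr = v := by
  obtain ⟨y, -, -, hy⟩ := exists_pred_eq_advSem α β x (leaf v) rr
  rw [← hy, pred]

lemma advSem_node_le {i : Fin d} {l r : BTree d} (h : (node i l r).indices.Nodup) (b : Bool)
    {k m rr : ℕ} (hkm : k + m + (if b = x i then 0 else 1) ≤ rr) :
    advSem α β x (node i l r) rr
      ≤ (if b then α else β) * advSem α β x r k + (if b then β else α) * advSem α β x l m := by
  obtain ⟨hil, hir, hlr, -, -⟩ := nodup_indices_node h
  obtain ⟨yr, hyr, hyr_out, hr⟩ := exists_pred_eq_advSem α β x r k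
  obtain ⟨yl, hyl, hyl_out, hl⟩ := exists_pred_eq_advSem α β x l m
  set y := update (r.restrict yr yl) i b
  have hyi : y i = b := update_self ..
  have hy_r : r.pred α β y = r.pred α β yr := pred_congr α β r fun j hj => by
    simp [y, update_of_ne (ne_of_mem_of_not_mem hj hir), restrict_of_mem hj]
  have hy_l : l.pred α β y = l.pred α β yl := pred_congr α β l fun j hj => by
    simp [y, update_of_ne (ne_of_mem_of_not_mem hj hil),
      restrict_of_notMem (Multiset.disjoint_left.mp hlr hj)]
  refine (advSem_le_pred (y := y) ((hammingDist_update_restrict_le r i b yr yl x).trans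
    (by omega)) fun j hj => ?_).trans_eq ?_
  · simp only [indices, Multiset.mem_cons, Multiset.mem_add, not_or] at hj
    simp [y, update_of_ne hj.1, restrict_of_notMem hj.2.2, hyl_out j hj.2.1]
  · rw [pred, hyi, hy_r, hy_l, hr, hl]

lemma exists_advSem_node_le_pred (hα : 0 ≤ α) (hβ : 0 ≤ β) {i : Fin d} {l r : BTree d}
    (h : (node i l r).indices.Nodup) {y : Fin d → Bool} {rr : ℕ} (hy : hammingDist y x ≤ rr) :
    ∃ k, k + (if y i = x i then 0 else 1) ≤ rr ∧
      (if y i then α else β) * advSem α β x r k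
          + (if y i then β else α) * advSem α β x l (rr - (if y i = x i then 0 else 1) - k)
        ≤ (node i l r).pred α β y := by
  have hcount := hammingDist_restrict_add_restrict_le h y x
  refine ⟨hammingDist (r.restrict y x) x, by omega, ?_⟩
  rw [pred, ← pred_restrict α β r y x, ← pred_restrict α β l y x]
  have hwr : 0 ≤ (if y i then α else β) := by split_ifs <;> assumption
  have hwl : 0 ≤ (if y i then β else α) := by split_ifs <;> assumption
  gcongr
  · exact advSem_le_pred le_rfl fun j hj => restrict_of_notMem hj y x
  · exact advSem_le_pred (by omega) fun j hj => restrict_of_notMem hj y x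

lemma finite_setOf_exists_le_eq (n : ℕ) (P : ℕ → Prop) (hP : ∀ k, P k → k ≤ n) (f : ℕ → ℝ) :
    {s | ∃ k, P k ∧ s = f k}.Finite :=
  ((Set.finite_Iic n).image f).subset <| by rintro _ ⟨k, hk, rfl⟩; exact ⟨k, hP k hk, rfl⟩

lemma advSem_node (hα : 0 ≤ α) (hβ : 0 ≤ β) {i : Fin d} {l r : BTree d}
    (h : (node i l r).indices.Nodup) (rr : ℕ) :
    advSem α β x (node i l r) rr
      = sInf ({s | ∃ k ≤ rr, s = (if x i then α else β) * advSem α β x r k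
                  + (if x i then β else α) * advSem α β x l (rr - k)}
          ∪ {s | ∃ k, k + 1 ≤ rr ∧ s = (if x i then β else α) * advSem α β x r k
                  + (if x i then α else β) * advSem α β x l (rr - 1 - k)}) := by
  refine le_antisymm (le_csInf ⟨_, .inl ⟨0, Nat.zero_le rr, rfl⟩⟩ ?_) ?_
  · rintro _ (⟨k, hk, rfl⟩ | ⟨k, hk, rfl⟩)
    · exact advSem_node_le h (x i) (by simp; omega)
    · refine (advSem_node_le h (!x i) (k := k) (m := rr - 1 - k) (by simp; omega)).trans_eq ?_
      cases x i <;> rfl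
  · obtain ⟨y, hy, -, hy_eq⟩ := exists_pred_eq_advSem α β x (node i l r) rr
    obtain ⟨k, hk, hle⟩ := exists_advSem_node_le_pred hα hβ h hy
    rw [← hy_eq]
    refine (csInf_le (((finite_setOf_exists_le_eq rr _ (fun _ hk => hk) _).union
      (finite_setOf_exists_le_eq rr _ (fun _ hk => by omega) _)).bddBelow) ?_).trans hle
    by_cases hyi : y i = x i
    · simp only [hyi, if_true, add_zero, tsub_zero] at hk hle ⊢
      exact .inl ⟨k, hk, rfl⟩
    · have hyi' : y i = !x i := Bool.eq_not_iff.2 hyi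
      simp only [hyi, if_false] at hk hle
      refine .inr ⟨k, hk, ?_⟩
      rw [hyi']
      cases x i <;> rfl

lemma advSem_eq_sInf_sum_flipProb_mul_eval (α : ℝ) (x : Fin d → Bool) {t : BTree d}
    (h : t.indices.Nodup) (rr : ℕ) :
    advSem α (1 - α) x t rr
      = sInf {s | ∃ y : Fin d → Bool, hammingDist y x ≤ rr ∧
          s = ∑ z, flipProb α (1 - α) y z * t.eval z} := by
  simp only [sum_flipProb_mul_eval α _ t h, advSem_eq_sInf_advSet]
  congr 1
  ext s
  constructor
  · rintro ⟨y, hy, -, rfl⟩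
    exact ⟨y, hy, rfl⟩
  · rintro ⟨y, hy, rfl⟩
    exact ⟨t.restrict y x, (hammingDist_restrict_le t y x).trans hy,
      fun j hj => restrict_of_notMem hj y x, (pred_restrict α _ t y x).symm⟩

end Adversary

/-- Correctness of the dynamic program (Algorithm 3): `adv` satisfies the
leaf and node recursions (the two inner minima correspond to not perturbing
/ perturbing the split coordinate of the node, the latter swapping the
routing weights and consuming one budget unit), and at the root it computes
`min_{‖x̄ − x‖₀ ≤ r} E[f(φ(x̄))]`. -/
theorem stmt_17 (d : ℕ) (α : ℝ) (hα : α ∈ Set.Ioo (0 : ℝ) 1)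
    (x : Fin d → Bool) :
    (∀ (v : ℝ) (rr : ℕ), advSem α (1 - α) x (BTree.leaf v) rr = v)
    ∧ (∀ (i : Fin d) (l r : BTree d) (rr : ℕ),
        (BTree.node i l r).indices.Nodup →
        advSem α (1 - α) x (BTree.node i l r) rr
          = sInf
              ({s : ℝ | ∃ k ≤ rr,
                  s = (if x i then α else 1 - α) * advSem α (1 - α) x r k
                    + (if x i then 1 - α else α) * advSem α (1 - α) x l (rr - k)}
                ∪ {s : ℝ | ∃ k, k + 1 ≤ rr ∧
                  s = (if x i then 1 - α else α) * advSem α (1 - α) x r k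
                    + (if x i then α else 1 - α)
                        * advSem α (1 - α) x l (rr - 1 - k)}))
    ∧ (∀ (t : BTree d) (rr : ℕ), t.indices.Nodup →
        advSem α (1 - α) x t rr
          = sInf {s : ℝ | ∃ xb : Fin d → Bool,
              (Finset.univ.filter fun i => xb i ≠ x i).card ≤ rr ∧
              s = ∑ z : Fin d → Bool,
                    flipProb α (1 - α) xb z * BTree.eval t z}) := by
  obtain ⟨hα0, hα1⟩ := hα
  exact ⟨fun v rr => advSem_leaf v rr,
    fun i l r rr h => advSem_node hα0.le (by linarith) h rr,
    fun t rr h => advSem_eq_sInf_sum_flipProb_mul_eval α x h rr⟩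
end
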